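/- arXiv:2604.26540 — 7 statements merged into one kernel-verified Lean document; each statement's English description precedes it below -/
import Mathlib

section
/- Let X and Y be locally compact Hausdorff spaces and let T : C₀(X)⁺ → C₀(Y)⁺ be a bijection satisfying ‖T(f+g)‖ = ‖Tf + Tg‖ for all f, g ∈ C₀(X)⁺. Then there exist a homeomorphism τ : Y → X and a continuous function h : Y → (0,∞) that is bounded and bounded away from zero, such that Tf(y) = h(y)·f(τ(y)) for all f ∈ C₀(X)⁺ and all y ∈ Y. -/
open scoped ZeroAtInfty

def posCone (X : Type*) [TopologicalSpace X] : Set C₀(X, ℝ) :=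
  {f | ∀ x, 0 ≤ f x}

/-!
With `S = T⁻¹` on the cones, `a ⊕ b := T (S a + S b)` is a commutative operation on the cone of
`C₀(Y)` with `‖a ⊕ b‖ = ‖a + b‖` and `‖(a ⊕ b) + c‖ = ‖a + (b ⊕ c)‖`. Testing these identities
against tall bumps of small support shows `a ⊕ b = a + b`, so `T` and `S` are additive, hence
monotone, positively homogeneous and bounded. For fixed `y`, the compact sets containing
`{p > 0}` for some `p` with `T p y > 0` form a directed family, so they share a point `τ y`; the
functional `f ↦ T f y` then ignores functions vanishing near `τ y`, which forces
`T f y = h y * f (τ y)`. Testing on bumps gives continuity of `τ`, `τ⁻¹`, `h` and the bounds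
on `h`.
-/

open Filter Set Topology
open scoped CompactlySupported BoundedContinuousFunction

section Cone

variable {Z : Type*} [TopologicalSpace Z]

lemma zero_mem_posCone : (0 : C₀(Z, ℝ)) ∈ posCone Z := fun _ => le_rfl

lemma add_mem_posCone {f g : C₀(Z, ℝ)} (hf : f ∈ posCone Z) (hg : g ∈ posCone Z) :
    f + g ∈ posCone Z := fun z => add_nonneg (hf z) (hg z)

lemma smul_mem_posCone {f : C₀(Z, ℝ)} (hf : f ∈ posCone Z) {c : ℝ} (hc : 0 ≤ c) :
    c • f ∈ posCone Z := fun z => mul_nonneg hc (hf z)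

lemma sub_mem_posCone {f g : C₀(Z, ℝ)} (hfg : ∀ z, f z ≤ g z) : g - f ∈ posCone Z :=
  fun z => sub_nonneg.mpr (hfg z)

end Cone

namespace ZeroAtInftyContinuousMap

variable {Z : Type*} [TopologicalSpace Z]

lemma apply_le_norm (f : C₀(Z, ℝ)) (z : Z) : f z ≤ ‖f‖ :=
  (le_abs_self _).trans <| by simpa [norm_toBCF_eq_norm] using f.toBCF.norm_coe_le_norm z

lemma norm_le_of_forall_le {f : C₀(Z, ℝ)} (hf : f ∈ posCone Z) {C : ℝ} (hC : 0 ≤ C)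
    (h : ∀ z, f z ≤ C) : ‖f‖ ≤ C := by
  rw [← norm_toBCF_eq_norm, BoundedContinuousFunction.norm_le hC]
  intro z
  simpa [abs_of_nonneg (hf z)] using h z

lemma exists_apply_eq_norm [Nonempty Z] {f : C₀(Z, ℝ)} (hf : f ∈ posCone Z) :
    ∃ z, f z = ‖f‖ := by
  obtain ⟨z₀⟩ := ‹Nonempty Z›
  have hmax : ∃ z₁, ∀ᶠ z in cocompact Z, f z ≤ f z₁ := by
    by_cases hpos : ∃ z₁, 0 < f z₁
    · obtain ⟨z₁, hz₁⟩ := hpos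
      exact ⟨z₁, ((zero_at_infty f).eventually (gt_mem_nhds hz₁)).mono fun _ => le_of_lt⟩
    · simp only [not_exists, not_lt] at hpos
      exact ⟨z₀, .of_forall fun z => (hpos z).trans (hf z₀)⟩
  obtain ⟨z₁, hz₁⟩ := hmax
  obtain ⟨z, hz⟩ := f.continuous.exists_forall_ge' z₁ hz₁
  exact ⟨z, le_antisymm (f.apply_le_norm z) (norm_le_of_forall_le hf (hf z) hz)⟩

lemma isCompact_setOf_le_apply (f : C₀(Z, ℝ)) {δ : ℝ} (hδ : 0 < δ) :
    IsCompact {z | δ ≤ f z} := by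
  obtain ⟨K, hK, hKf⟩ := mem_cocompact.mp ((zero_at_infty f).eventually (gt_mem_nhds hδ))
  refine hK.of_isClosed_subset (isClosed_le continuous_const f.continuous) fun z hz => ?_
  by_contra hzK
  exact (show f z < δ from hKf hzK).not_ge hz

lemma hasSum_apply {ι : Type*} {g : ι → C₀(Z, ℝ)} {G : C₀(Z, ℝ)} (hG : HasSum g G) (x : Z) :
    HasSum (fun i => g i x) (G x) :=
  hG.map ({ toFun f := f x, map_zero' := rfl, map_add' _ _ := rfl } : C₀(Z, ℝ) →+ ℝ)
    ((continuous_eval_const (F := Z →ᵇ ℝ) x).comp isometry_toBCF.continuous)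

/-- `(f - δ)⁺`. -/
def posPartSub (f : C₀(Z, ℝ)) {δ : ℝ} (hδ : 0 ≤ δ) : C₀(Z, ℝ) where
  toFun z := max (f z - δ) 0
  continuous_toFun := by fun_prop
  zero_at_infty' := by
    simpa [hδ] using ((zero_at_infty f).sub_const δ).max (tendsto_const_nhds (x := (0 : ℝ)))

@[simp] lemma posPartSub_apply (f : C₀(Z, ℝ)) {δ : ℝ} (hδ : 0 ≤ δ) (z : Z) :
    f.posPartSub hδ z = max (f z - δ) 0 := rfl

lemma posPartSub_mem_posCone (f : C₀(Z, ℝ)) {δ : ℝ} (hδ : 0 ≤ δ) :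
    f.posPartSub hδ ∈ posCone Z := fun _ => le_max_right _ _

variable [T2Space Z] [LocallyCompactSpace Z]

lemma exists_bump {z₀ : Z} {W : Set Z} (hW : IsOpen W) (hz₀ : z₀ ∈ W) :
    ∃ v : C₀(Z, ℝ), v ∈ posCone Z ∧ (∀ z, v z ≤ 1) ∧ tsupport v ⊆ W ∧
      ∀ᶠ z in 𝓝 z₀, v z = 1 := by
  obtain ⟨K, hK, hz₀K, hKW⟩ := exists_compact_subset hW hz₀
  obtain ⟨v, hvK, hvc, hvW, hv01⟩ := exists_continuousMap_one_of_isCompact_subset_isOpen hK hW hKW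
  exact ⟨(⟨v, hvc⟩ : C_c(Z, ℝ)), fun z => (hv01 z).1, fun z => (hv01 z).2, hvW,
    mem_of_superset (mem_interior_iff_mem_nhds.mp hz₀K) fun z hz => hvK hz⟩

lemma exists_bump_add_le_one {v : C₀(Z, ℝ)} (hv1 : ∀ z, v z ≤ 1) {z₀ : Z}
    (hz₀ : z₀ ∉ tsupport v) :
    ∃ w : C₀(Z, ℝ), w ∈ posCone Z ∧ w z₀ = 1 ∧ ∀ z, v z + w z ≤ 1 := by
  obtain ⟨w, hw, hw1, hwv, hwz₀⟩ := exists_bump (isClosed_tsupport v).isOpen_compl hz₀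
  refine ⟨w, hw, hwz₀.self_of_nhds, fun z => ?_⟩
  by_cases hz : z ∈ tsupport v
  · rw [image_eq_zero_of_notMem_tsupport fun hzw => hwv hzw hz, add_zero]
    exact hv1 z
  · rw [image_eq_zero_of_notMem_tsupport hz, zero_add]
    exact hw1 z

end ZeroAtInftyContinuousMap

section NormAdditiveOperation

open ZeroAtInftyContinuousMap

variable {Y : Type*} [TopologicalSpace Y]
  {op : C₀(Y, ℝ) → C₀(Y, ℝ) → C₀(Y, ℝ)}
  (hmem : ∀ a ∈ posCone Y, ∀ b ∈ posCone Y, op a b ∈ posCone Y)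
  (hcomm : ∀ a b, op a b = op b a)
  (hnorm : ∀ a ∈ posCone Y, ∀ b ∈ posCone Y, ‖op a b‖ = ‖a + b‖)
  (hassoc : ∀ a ∈ posCone Y, ∀ b ∈ posCone Y, ∀ c ∈ posCone Y, ‖op a b + c‖ = ‖a + op b c‖)

include hnorm hassoc in
lemma op_smul_apply_le_norm {b v w : C₀(Y, ℝ)} (hb : b ∈ posCone Y) (hv : v ∈ posCone Y)
    (hw : w ∈ posCone Y) (hvw : ∀ z, v z + w z ≤ 1) {R : ℝ} (hR : 0 ≤ R) {z : Y}
    (hwz : w z = 1) : op b (R • v) z ≤ ‖b‖ := by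
  have hRv := smul_mem_posCone hv hR
  have hRw := smul_mem_posCone hw hR
  have hlow : op b (R • v) z + R ≤ ‖op b (R • v) + R • w‖ := by
    simpa [hwz] using apply_le_norm (op b (R • v) + R • w) z
  have hsum : ‖R • v + R • w‖ ≤ R := norm_le_of_forall_le (add_mem_posCone hRv hRw) hR fun z' => by
    simpa [mul_add] using mul_le_mul_of_nonneg_left (hvw z') hR
  have htri := norm_add_le b (op (R • v) (R • w))
  rw [hnorm _ hRv _ hRw] at htri
  linarith [hassoc b hb _ hRv _ hRw]

lemma norm_add_smul_le {a v : C₀(Y, ℝ)} (ha : a ∈ posCone Y) (hv : v ∈ posCone Y)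
    (hv1 : ∀ z, v z ≤ 1) {R : ℝ} (hR : ‖a‖ ≤ R) {y : Y} {ε : ℝ} (hε : 0 < ε)
    (hsupp : ∀ z ∈ tsupport v, a z < a y + ε) : ‖a + R • v‖ ≤ a y + ε + R := by
  have hR0 : 0 ≤ R := (norm_nonneg a).trans hR
  refine norm_le_of_forall_le (add_mem_posCone ha (smul_mem_posCone hv hR0))
    (by linarith [ha y]) fun z => ?_
  simp only [coe_add, coe_smul, Pi.add_apply, Pi.smul_apply, smul_eq_mul]
  by_cases hz : z ∈ tsupport v
  · nlinarith [hsupp z hz, hv1 z]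
  · rw [image_eq_zero_of_notMem_tsupport hz, mul_zero, add_zero]
    linarith [apply_le_norm a z, ha y]

variable [T2Space Y] [LocallyCompactSpace Y]

include hmem hcomm hnorm hassoc

lemma op_apply_le {a b : C₀(Y, ℝ)} (ha : a ∈ posCone Y) (hb : b ∈ posCone Y) (y : Y) :
    op a b y ≤ a y + b y := by
  refine le_of_forall_pos_le_add fun ε hε => ?_
  obtain ⟨v, hv, hv1, hvW, hvy⟩ :=
    exists_bump (z₀ := y) (W := {z | a z < a y + ε / 2} ∩ {z | b z < b y + ε / 2})
    ((isOpen_lt a.continuous continuous_const).inter (isOpen_lt b.continuous continuous_const))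
    (by simp [hε])
  set R := ‖a‖ + ‖b‖
  have hR : 0 ≤ R := by positivity
  have hRv := smul_mem_posCone hv hR
  have hlow : op a b y + R ≤ ‖op a b + R • v‖ := by
    simpa [hvy.self_of_nhds] using apply_le_norm (op a b + R • v) y
  have hswap : ‖op a b + R • v‖ = ‖b + op a (R • v)‖ := by
    rw [hcomm a b]; exact hassoc b hb a ha _ hRv
  have hopnorm : ‖op a (R • v)‖ ≤ a y + ε / 2 + R := by
    rw [hnorm a ha _ hRv]
    exact norm_add_smul_le ha hv hv1 (by simp [R]) (by positivity) fun z hz => (hvW hz).1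
  have hup : ‖b + op a (R • v)‖ ≤ a y + b y + ε + R := by
    refine norm_le_of_forall_le (add_mem_posCone hb (hmem a ha _ hRv))
      (by linarith [ha y, hb y]) fun z => ?_
    rw [ZeroAtInftyContinuousMap.add_apply]
    by_cases hz : z ∈ tsupport v
    · obtain ⟨-, hbz⟩ : _ ∧ b z < b y + ε / 2 := hvW hz
      linarith [apply_le_norm (op a (R • v)) z]
    · obtain ⟨w, hw, hwz, hvw⟩ := exists_bump_add_le_one hv1 hz
      linarith [op_smul_apply_le_norm hnorm hassoc ha hv hw hvw hR hwz, apply_le_norm b z,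
        ha y, hb y]
  linarith

lemma le_op_apply {a b : C₀(Y, ℝ)} (ha : a ∈ posCone Y) (hb : b ∈ posCone Y) (y : Y) :
    a y + b y ≤ op a b y := by
  have : Nonempty Y := ⟨y⟩
  set d := op a b
  have hd : d ∈ posCone Y := hmem a ha b hb
  refine le_of_forall_pos_le_add fun ε hε => ?_
  obtain ⟨v, hv, hv1, hvW, hvy⟩ :=
    exists_bump (z₀ := y) (W := {z | a y - ε / 2 < a z} ∩ {z | d z < d y + ε / 2})
    ((isOpen_lt continuous_const a.continuous).inter (isOpen_lt d.continuous continuous_const))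
    (by simp [hε])
  set R := ‖b‖ + ‖d‖ + 1
  have hR : 0 ≤ R := by positivity
  have hRv := smul_mem_posCone hv hR
  -- `e` peaks inside the support of `v`, where `a` is almost `a y`.
  set e := op b (R • v)
  have he : e ∈ posCone Y := hmem b hb _ hRv
  obtain ⟨z, hz⟩ := exists_apply_eq_norm he
  have hez : b y + R ≤ e z := by
    rw [hz, hnorm b hb _ hRv]
    simpa [hvy.self_of_nhds] using apply_le_norm (b + R • v) y
  have hzv : z ∈ tsupport v := by
    by_contra hzv
    have := op_apply_le hmem hcomm hnorm hassoc hb hRv z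
    simp only [ZeroAtInftyContinuousMap.smul_apply, image_eq_zero_of_notMem_tsupport hzv,
      smul_zero, add_zero] at this
    linarith [apply_le_norm b z, hb y, norm_nonneg d]
  have hlow : a y - ε / 2 + (b y + R) ≤ ‖d + R • v‖ := by
    rw [hassoc a ha b hb _ hRv]
    change _ ≤ ‖a + e‖
    have := apply_le_norm (a + e) z
    rw [ZeroAtInftyContinuousMap.add_apply] at this
    obtain ⟨haz, -⟩ : a y - ε / 2 < a z ∧ _ := hvW hzv
    linarith
  have hup : ‖d + R • v‖ ≤ d y + ε / 2 + R :=
    norm_add_smul_le hd hv hv1 (by simp [R]; linarith [norm_nonneg b]) (by positivity)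
      fun z hz => (hvW hz).2
  linarith

end NormAdditiveOperation

theorem map_add_of_norm_add {X Y : Type*} [TopologicalSpace X] [TopologicalSpace Y]
    [T2Space Y] [LocallyCompactSpace Y] {T : C₀(X, ℝ) → C₀(Y, ℝ)} {S : C₀(Y, ℝ) → C₀(X, ℝ)}
    (hT : MapsTo T (posCone X) (posCone Y)) (hS : MapsTo S (posCone Y) (posCone X))
    (hinv : InvOn S T (posCone X) (posCone Y))
    (hnorm : ∀ f ∈ posCone X, ∀ g ∈ posCone X, ‖T (f + g)‖ = ‖T f + T g‖)
    {f g : C₀(X, ℝ)} (hf : f ∈ posCone X) (hg : g ∈ posCone X) : T (f + g) = T f + T g := by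
  let op a b := T (S a + S b)
  have hmem : ∀ a ∈ posCone Y, ∀ b ∈ posCone Y, op a b ∈ posCone Y :=
    fun a ha b hb => hT (add_mem_posCone (hS ha) (hS hb))
  have hcomm : ∀ a b, op a b = op b a := fun a b => by simp only [op, add_comm]
  have hnorm' : ∀ a ∈ posCone Y, ∀ b ∈ posCone Y, ‖op a b‖ = ‖a + b‖ := fun a ha b hb => by
    simp only [op, hnorm _ (hS ha) _ (hS hb), hinv.2 ha, hinv.2 hb]
  have hassoc : ∀ a ∈ posCone Y, ∀ b ∈ posCone Y, ∀ c ∈ posCone Y,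
      ‖op a b + c‖ = ‖a + op b c‖ := fun a ha b hb c hc => by
    calc ‖T (S a + S b) + c‖ = ‖T (S a + S b) + T (S c)‖ := by rw [hinv.2 hc]
      _ = ‖T (S a + (S b + S c))‖ := by
        rw [← add_assoc, hnorm _ (add_mem_posCone (hS ha) (hS hb)) _ (hS hc)]
      _ = ‖a + T (S b + S c)‖ := by
        rw [hnorm _ (hS ha) _ (add_mem_posCone (hS hb) (hS hc)), hinv.2 ha]
  have hfg : T (f + g) = op (T f) (T g) := by simp only [op, hinv.1 hf, hinv.1 hg]
  ext y
  rw [hfg, ZeroAtInftyContinuousMap.add_apply]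
  exact le_antisymm (op_apply_le hmem hcomm hnorm' hassoc (hT hf) (hT hg) y)
    (le_op_apply hmem hcomm hnorm' hassoc (hT hf) (hT hg) y)

section AdditiveOnCone

open ZeroAtInftyContinuousMap

variable {α β : Type*} [TopologicalSpace α] [TopologicalSpace β] {A : C₀(α, ℝ) → C₀(β, ℝ)}
  (hA : MapsTo A (posCone α) (posCone β))
  (hadd : ∀ f ∈ posCone α, ∀ g ∈ posCone α, A (f + g) = A f + A g)

include hadd in
lemma map_add_of_invOn {B : C₀(β, ℝ) → C₀(α, ℝ)} (hB : MapsTo B (posCone β) (posCone α))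
    (hinv : InvOn B A (posCone α) (posCone β)) {u v : C₀(β, ℝ)} (hu : u ∈ posCone β)
    (hv : v ∈ posCone β) : B (u + v) = B u + B v :=
  calc B (u + v) = B (A (B u) + A (B v)) := by rw [hinv.2 hu, hinv.2 hv]
    _ = B (A (B u + B v)) := by rw [hadd _ (hB hu) _ (hB hv)]
    _ = B u + B v := hinv.1 (add_mem_posCone (hB hu) (hB hv))

include hadd in
lemma map_zero_of_add : A 0 = 0 := by
  simpa using hadd 0 zero_mem_posCone 0 zero_mem_posCone

include hA hadd

lemma apply_le_apply_of_le {f g : C₀(α, ℝ)} (hf : f ∈ posCone α) (hfg : ∀ x, f x ≤ g x)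
    (z : β) : A f z ≤ A g z := by
  have hgf := sub_mem_posCone hfg
  have hsplit := hadd f hf _ hgf
  rw [add_sub_cancel] at hsplit
  rw [hsplit, ZeroAtInftyContinuousMap.add_apply]
  linarith [hA hgf z]

omit hA in
lemma map_natCast_smul_of_add (n : ℕ) {f : C₀(α, ℝ)} (hf : f ∈ posCone α) :
    A ((n : ℝ) • f) = (n : ℝ) • A f := by
  induction n with
  | zero => simpa using map_zero_of_add hadd
  | succ n ih =>
    have hsucc : ((n + 1 : ℕ) : ℝ) • f = (n : ℝ) • f + f := by ext x; simp [add_mul]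
    rw [hsucc, hadd _ (smul_mem_posCone hf n.cast_nonneg) f hf, ih]
    ext x
    simp [add_mul]

/-- Comparing `n • (c • f)` with `⌊n c⌋₊ • f` and `(⌊n c⌋₊ + 1) • f` by monotonicity
pins `A (c • f)` down to within `A f / n` of `c • A f`. -/
lemma map_smul_of_add {c : ℝ} (hc : 0 ≤ c) {f : C₀(α, ℝ)} (hf : f ∈ posCone α) :
    A (c • f) = c • A f := by
  ext z
  simp only [ZeroAtInftyContinuousMap.smul_apply, smul_eq_mul]
  have hAf : 0 ≤ A f z := hA hf z
  have hfloor : ∀ n : ℕ, n * |A (c • f) z - c * A f z| ≤ A f z := by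
    intro n
    have hn : (n : ℝ) * A (c • f) z = A (((n : ℝ) * c) • f) z := by
      rw [mul_smul, map_natCast_smul_of_add hadd n (smul_mem_posCone hf hc)]
      simp
    have hm : ∀ m : ℕ, A ((m : ℝ) • f) z = m * A f z := fun m => by
      simp [map_natCast_smul_of_add hadd m hf]
    have hlow := apply_le_apply_of_le hA hadd (f := ((⌊n * c⌋₊ : ℕ) : ℝ) • f)
      (g := ((n : ℝ) * c) • f) (smul_mem_posCone hf (Nat.cast_nonneg _))
      (fun x => mul_le_mul_of_nonneg_right (Nat.floor_le (by positivity)) (hf x)) z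
    have hup := apply_le_apply_of_le hA hadd (f := ((n : ℝ) * c) • f)
      (g := ((⌊n * c⌋₊ + 1 : ℕ) : ℝ) • f) (smul_mem_posCone hf (by positivity))
      (fun x => mul_le_mul_of_nonneg_right (by push_cast; exact (Nat.lt_floor_add_one _).le)
        (hf x)) z
    rw [hm, ← hn] at hlow hup
    push_cast at hup
    have h1 := Nat.floor_le (mul_nonneg n.cast_nonneg hc)
    have h2 := Nat.lt_floor_add_one ((n : ℝ) * c)
    rw [← abs_of_nonneg (Nat.cast_nonneg (α := ℝ) n), ← abs_mul, abs_le]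
    constructor <;> nlinarith
  by_contra hne
  obtain ⟨n, hn⟩ := exists_nat_gt (A f z / |A (c • f) z - c * A f z|)
  rw [div_lt_iff₀ (abs_pos.mpr (sub_ne_zero.mpr hne))] at hn
  linarith [hfloor n]

/-- Otherwise a norm-convergent series `∑ gₙ` of cone elements with `‖A gₙ‖ > 2ⁿ` would
dominate every `gₙ`, and monotonicity would give `‖A (∑ gₙ)‖ > 2ⁿ` for all `n`. -/
lemma exists_norm_le_mul_norm_of_add : ∃ C, 0 < C ∧ ∀ f ∈ posCone α, ‖A f‖ ≤ C * ‖f‖ := by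
  by_contra hcon
  simp only [not_exists, not_and, not_forall, not_le] at hcon
  choose F hF hFA using fun n : ℕ => hcon (4 ^ n) (by positivity)
  have hFpos : ∀ n, 0 < ‖F n‖ := fun n => by
    refine (norm_nonneg _).lt_of_ne fun h => ?_
    have := hFA n
    rw [norm_eq_zero.mp h.symm, map_zero_of_add hadd] at this
    simp at this
  set g : ℕ → C₀(α, ℝ) := fun n => (2 ^ n * ‖F n‖)⁻¹ • F n
  have hg : ∀ n, g n ∈ posCone α := fun n => smul_mem_posCone (hF n) (by positivity)
  have hgnorm : ∀ n, ‖g n‖ = (1 / 2) ^ n := fun n => by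
    have := (hFpos n).ne'
    simp only [g, norm_smul, norm_inv, norm_mul, norm_pow, Real.norm_ofNat, norm_norm]
    field_simp
    rw [← mul_pow]
    norm_num
  have hAg : ∀ n, 2 ^ n < ‖A (g n)‖ := fun n => by
    have hpos : 0 < 2 ^ n * ‖F n‖ := mul_pos (by positivity) (hFpos n)
    rw [map_smul_of_add hA hadd (inv_pos.mpr hpos).le (hF n), norm_smul,
      Real.norm_of_nonneg (inv_pos.mpr hpos).le, lt_inv_mul_iff₀ hpos]
    calc _ = 4 ^ n * ‖F n‖ := by rw [show (4 : ℝ) = 2 * 2 by norm_num, mul_pow]; ring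
      _ < ‖A (F n)‖ := hFA n
  obtain ⟨G, hG⟩ : Summable g := .of_norm_bounded summable_geometric_two fun n => (hgnorm n).le
  have hgG : ∀ n x, g n x ≤ G x := fun n x => le_hasSum (hasSum_apply hG x) n fun m _ => hg m x
  have hGmem : G ∈ posCone α := fun x => (hasSum_apply hG x).nonneg fun n => hg n x
  obtain ⟨n, hn⟩ := pow_unbounded_of_one_lt ‖A G‖ (one_lt_two (α := ℝ))
  have hAgG : ‖A (g n)‖ ≤ ‖A G‖ := norm_le_of_forall_le (hA (hg n)) (norm_nonneg _) fun z =>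
    (apply_le_apply_of_le hA hadd (hg n) (hgG n) z).trans (apply_le_norm _ z)
  linarith [hAg n]

end AdditiveOnCone

section PointwiseRepresentation

open ZeroAtInftyContinuousMap

variable {α β : Type*} [TopologicalSpace α] [TopologicalSpace β] {A : C₀(α, ℝ) → C₀(β, ℝ)}
  (hA : MapsTo A (posCone α) (posCone β))
  (hadd : ∀ f ∈ posCone α, ∀ g ∈ posCone α, A (f + g) = A f + A g)

/-- The point common to these compact sets is the support of the positive functional
`f ↦ A f y`. -/
def supportCompacts (A : C₀(α, ℝ) → C₀(β, ℝ)) (y : β) : Set (Set α) :=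
  {K | IsCompact K ∧ ∃ p ∈ posCone α, 0 < A p y ∧ {x | 0 < p x} ⊆ K}

include hA hadd

/-- Cutting `p` down to `(p - δ)⁺` for small `δ` keeps `A p y` positive, by boundedness of `A`. -/
lemma exists_mem_supportCompacts_subset {p : C₀(α, ℝ)} (hp : p ∈ posCone α) {y : β}
    (hpy : 0 < A p y) : ∃ K ∈ supportCompacts A y, K ⊆ {x | 0 < p x} := by
  obtain ⟨C, hC, hCA⟩ := exists_norm_le_mul_norm_of_add hA hadd
  set δ := A p y / (2 * C)
  have hδ : 0 < δ := by positivity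
  set p' := p.posPartSub hδ.le
  have hp' : p' ∈ posCone α := p.posPartSub_mem_posCone hδ.le
  have hrest : p - p' ∈ posCone α :=
    sub_mem_posCone fun x => max_le (by linarith) (hp x)
  have hrest_le : ‖p - p'‖ ≤ δ := norm_le_of_forall_le hrest hδ.le fun x => by
    simp only [p', coe_sub, Pi.sub_apply, posPartSub_apply]
    linarith [le_max_left (p x - δ) 0]
  have hsplit : A p y = A p' y + A (p - p') y := by
    rw [← ZeroAtInftyContinuousMap.add_apply, ← hadd _ hp' _ hrest, add_sub_cancel]
  have hsmall : A (p - p') y ≤ A p y / 2 :=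
    calc A (p - p') y ≤ C * ‖p - p'‖ := (apply_le_norm _ _).trans (hCA _ hrest)
      _ ≤ C * δ := by gcongr
      _ = A p y / 2 := by simp only [δ]; field_simp
  refine ⟨{x | δ ≤ p x}, ⟨p.isCompact_setOf_le_apply hδ, p', hp', by linarith, fun x hx => ?_⟩,
    fun x hx => hδ.trans_le hx⟩
  have hx' : 0 < max (p x - δ) 0 := hx
  simp only [lt_max_iff, lt_irrefl, or_false] at hx'
  exact (show δ ≤ p x by linarith)

lemma apply_eq_zero_of_eventuallyEq_zero {y : β} {x₀ : α} (hx₀ : x₀ ∈ ⋂₀ supportCompacts A y)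
    {q : C₀(α, ℝ)} (hq : q ∈ posCone α) (hq0 : ∀ᶠ x in 𝓝 x₀, q x = 0) : A q y = 0 := by
  refine ((hA hq y).eq_or_lt.resolve_right fun hqy => ?_).symm
  obtain ⟨K, hK, hKq⟩ := exists_mem_supportCompacts_subset hA hadd hq hqy
  exact (show 0 < q x₀ from hKq (hx₀ K hK)).ne' hq0.self_of_nhds

lemma apply_le_apply_of_eventually_le {y : β} {x₀ : α} (hx₀ : x₀ ∈ ⋂₀ supportCompacts A y)
    {f g : C₀(α, ℝ)} (hf : f ∈ posCone α) (hg : g ∈ posCone α)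
    (hfg : ∀ᶠ x in 𝓝 x₀, f x ≤ g x) : A f y ≤ A g y := by
  set r := (f - g).posPartSub le_rfl
  have hr : r ∈ posCone α := posPartSub_mem_posCone _ _
  have hr0 : A r y = 0 := apply_eq_zero_of_eventuallyEq_zero hA hadd hx₀ hr <|
    hfg.mono fun x hx => by simp [r, hx]
  calc A f y ≤ A (g + r) y := apply_le_apply_of_le hA hadd hf (fun x => by
        simp only [r, coe_add, coe_sub, Pi.add_apply, Pi.sub_apply, posPartSub_apply, sub_zero]
        linarith [le_max_left (f x - g x) 0]) y
    _ = A g y := by rw [hadd g hg r hr, ZeroAtInftyContinuousMap.add_apply, hr0, add_zero]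

lemma apply_eq_mul_of_eventually_eq_one {y : β} {x₀ : α} (hx₀ : x₀ ∈ ⋂₀ supportCompacts A y)
    {v : C₀(α, ℝ)} (hv : v ∈ posCone α) (hv1 : ∀ᶠ x in 𝓝 x₀, v x = 1) {f : C₀(α, ℝ)}
    (hf : f ∈ posCone α) : A f y = A v y * f x₀ := by
  have hAv : 0 ≤ A v y := hA hv y
  have hup : ∀ ε > 0, A f y ≤ A v y * (f x₀ + ε) := fun ε hε => by
    have hs : 0 ≤ f x₀ + ε := by linarith [hf x₀]
    have hnear : ∀ᶠ x in 𝓝 x₀, v x = 1 ∧ f x < f x₀ + ε :=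
      hv1.and (f.continuous.continuousAt.eventually (gt_mem_nhds (lt_add_of_pos_right _ hε)))
    have := apply_le_apply_of_eventually_le hA hadd hx₀ hf (smul_mem_posCone hv hs)
      (hnear.mono fun x hx => by simp [hx.1, hx.2.le])
    rwa [map_smul_of_add hA hadd hs hv, ZeroAtInftyContinuousMap.smul_apply, smul_eq_mul,
      mul_comm] at this
  have hlow : ∀ ε > 0, A v y * (f x₀ - ε) ≤ A f y := fun ε hε => by
    have hs : 0 ≤ max (f x₀ - ε) 0 := le_max_right _ _
    have hnear : ∀ᶠ x in 𝓝 x₀, v x = 1 ∧ f x₀ - ε < f x :=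
      hv1.and (f.continuous.continuousAt.eventually (lt_mem_nhds (sub_lt_self _ hε)))
    have := apply_le_apply_of_eventually_le hA hadd hx₀ (smul_mem_posCone hv hs) hf
      (hnear.mono fun x hx => by
        simp only [ZeroAtInftyContinuousMap.smul_apply, hx.1, smul_eq_mul, mul_one]
        exact max_le hx.2.le (hf x))
    rw [map_smul_of_add hA hadd hs hv, ZeroAtInftyContinuousMap.smul_apply, smul_eq_mul,
      mul_comm] at this
    exact (mul_le_mul_of_nonneg_left (le_max_left _ _) hAv).trans this
  have hlim : ∀ s : ℝ, Tendsto (fun ε => A v y * (f x₀ + s * ε)) (𝓝[>] 0)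
      (𝓝 (A v y * f x₀)) := fun s => by
    have : Continuous fun ε : ℝ => A v y * (f x₀ + s * ε) := by fun_prop
    simpa using (this.tendsto 0).mono_left nhdsWithin_le_nhds
  refine le_antisymm (ge_of_tendsto (hlim 1) ?_) (le_of_tendsto (hlim (-1)) ?_)
  · filter_upwards [self_mem_nhdsWithin] with ε hε using by simpa using hup ε hε
  · filter_upwards [self_mem_nhdsWithin] with ε hε using by
      simpa [sub_eq_add_neg] using hlow ε hε

variable {B : C₀(β, ℝ) → C₀(α, ℝ)} (hB : MapsTo B (posCone β) (posCone α))
  (hBadd : ∀ u ∈ posCone β, ∀ v ∈ posCone β, B (u + v) = B u + B v)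
  (hinv : InvOn B A (posCone α) (posCone β))

include hB hBadd hinv

/-- The common lower bound of `p₁` and `p₂` is `B (min (A p₁) (A p₂))`, as `B` is monotone. -/
lemma directedOn_supportCompacts (y : β) : DirectedOn (· ⊇ ·) (supportCompacts A y) := by
  rintro K₁ ⟨-, p₁, hp₁, hp₁y, hK₁⟩ K₂ ⟨-, p₂, hp₂, hp₂y, hK₂⟩
  set u := A p₁ - (A p₁ - A p₂).posPartSub le_rfl
  have hu_apply : ∀ z, u z = min (A p₁ z) (A p₂ z) := fun z => by
    simp only [u, coe_sub, Pi.sub_apply, posPartSub_apply, sub_zero]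
    rcases le_total (A p₁ z) (A p₂ z) with h | h
    · rw [min_eq_left h, max_eq_right (by linarith)]; ring
    · rw [min_eq_right h, max_eq_left (by linarith)]; ring
  have hu : u ∈ posCone β := fun z => by rw [hu_apply]; exact le_min (hA hp₁ z) (hA hp₂ z)
  have hBu_le {p : C₀(α, ℝ)} (hp : p ∈ posCone α) (hup : ∀ z, u z ≤ A p z) (x : α) :
      B u x ≤ p x := by
    simpa only [hinv.1 hp] using apply_le_apply_of_le hB hBadd hu hup x
  obtain ⟨K, hK, hKu⟩ := exists_mem_supportCompacts_subset hA hadd (hB hu)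
    (show 0 < A (B u) y by rw [hinv.2 hu, hu_apply]; exact lt_min hp₁y hp₂y)
  refine ⟨K, hK, hKu.trans fun x hx => hK₁ ?_, hKu.trans fun x hx => hK₂ ?_⟩
  · exact hx.trans_le (hBu_le hp₁ (fun z => (hu_apply z).trans_le (min_le_left _ _)) x)
  · exact hx.trans_le (hBu_le hp₂ (fun z => (hu_apply z).trans_le (min_le_right _ _)) x)

lemma nonempty_sInter_supportCompacts [T2Space α] {y : β}
    (hpos : ∃ p ∈ posCone α, 0 < A p y) : (⋂₀ supportCompacts A y).Nonempty := by
  obtain ⟨p, hp, hpy⟩ := hpos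
  obtain ⟨K, hK, -⟩ := exists_mem_supportCompacts_subset hA hadd hp hpy
  have : Nonempty (supportCompacts A y) := ⟨⟨K, hK⟩⟩
  refine IsCompact.nonempty_sInter_of_directed_nonempty_isCompact_isClosed
    (directedOn_supportCompacts hA hadd hB hBadd hinv y) ?_ (fun K hK => hK.1)
    (fun K hK => hK.1.isClosed)
  rintro K ⟨-, q, hq, hqy, hqK⟩
  by_contra hK
  have hq0 : q = 0 := ext fun x => le_antisymm
    (not_lt.mp fun hx => hK ⟨x, hqK hx⟩) (hq x)
  simp [hq0, map_zero_of_add hadd] at hqy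

theorem exists_apply_eq_mul_apply [T2Space α] [LocallyCompactSpace α] [T2Space β]
    [LocallyCompactSpace β] (y : β) :
    ∃ x : α, ∃ c : ℝ, 0 < c ∧ ∀ f ∈ posCone α, A f y = c * f x := by
  obtain ⟨u, hu, -, -, hu1⟩ := exists_bump isOpen_univ (mem_univ y)
  have hBuy : A (B u) y = 1 := by rw [hinv.2 hu, hu1.self_of_nhds]
  obtain ⟨x₀, hx₀⟩ := nonempty_sInter_supportCompacts hA hadd hB hBadd hinv
    ⟨B u, hB hu, hBuy ▸ one_pos⟩
  obtain ⟨v, hv, -, -, hv1⟩ := exists_bump isOpen_univ (mem_univ x₀)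
  have hrep f (hf : f ∈ posCone α) := apply_eq_mul_of_eventually_eq_one hA hadd hx₀ hv hv1 hf
  refine ⟨x₀, A v y, (hA hv y).lt_of_ne fun h0 => ?_, hrep⟩
  simpa [← h0, hBuy] using hrep _ (hB hu)

end PointwiseRepresentation

section WeightedComposition

open ZeroAtInftyContinuousMap

variable {α β : Type*} [TopologicalSpace α] [TopologicalSpace β] {A : C₀(α, ℝ) → C₀(β, ℝ)}
  {τ : β → α} {c : β → ℝ}
  (hrep : ∀ y, ∀ f ∈ posCone α, A f y = c y * f (τ y))

include hrep

lemma inv_le_weight_of_rightInvOn [T2Space β] [LocallyCompactSpace β] (hc : ∀ y, 0 < c y)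
    {B : C₀(β, ℝ) → C₀(α, ℝ)} (hB : MapsTo B (posCone β) (posCone α))
    (hAB : RightInvOn B A (posCone β)) {C : ℝ} (hC : 0 < C)
    (hBC : ∀ u ∈ posCone β, ‖B u‖ ≤ C * ‖u‖) (y : β) : C⁻¹ ≤ c y := by
  obtain ⟨u, hu, hu1, -, huy⟩ := exists_bump isOpen_univ (mem_univ y)
  rw [inv_le_iff_one_le_mul₀ hC]
  calc 1 = A (B u) y := by rw [hAB hu, huy.self_of_nhds]
    _ = c y * B u (τ y) := hrep y _ (hB hu)
    _ ≤ c y * (C * ‖u‖) := by gcongr; exacts [(hc y).le, (apply_le_norm _ _).trans (hBC u hu)]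
    _ ≤ c y * C := by
      gcongr
      · exact (hc y).le
      · exact mul_le_of_le_one_right hC.le (norm_le_of_forall_le hu zero_le_one hu1)

variable [T2Space α] [LocallyCompactSpace α]

lemma continuous_of_apply_eq_mul (hc : ∀ y, 0 < c y) : Continuous τ := by
  refine continuous_def.mpr fun W hW => isOpen_iff_mem_nhds.mpr fun y₀ hy₀ => ?_
  obtain ⟨v, hv, -, hvW, hv1⟩ := exists_bump hW hy₀
  have hpos : ∀ᶠ y in 𝓝 y₀, 0 < A v y := (map_continuous (A v)).continuousAt.eventually
    (lt_mem_nhds (by rw [hrep y₀ v hv, hv1.self_of_nhds, mul_one]; exact hc y₀))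
  refine hpos.mono fun y hy => hvW (subset_closure fun hvy => ?_)
  rw [hrep y v hv, hvy, mul_zero] at hy
  exact hy.false

lemma continuous_weight_of_apply_eq_mul (hτ : Continuous τ) : Continuous c := by
  refine continuous_iff_continuousAt.mpr fun y₀ => ?_
  obtain ⟨v, hv, -, -, hv1⟩ := exists_bump isOpen_univ (mem_univ (τ y₀))
  refine (map_continuous (A v)).continuousAt.congr ?_
  filter_upwards [(hτ.tendsto y₀).eventually hv1] with y hy
  rw [hrep y v hv, hy, mul_one]

lemma weight_le_of_norm_le {C : ℝ} (hC : 0 ≤ C) (hA : ∀ f ∈ posCone α, ‖A f‖ ≤ C * ‖f‖)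
    (y : β) : c y ≤ C := by
  obtain ⟨v, hv, hv1, -, hvτ⟩ := exists_bump isOpen_univ (mem_univ (τ y))
  calc c y = A v y := by rw [hrep y v hv, hvτ.self_of_nhds, mul_one]
    _ ≤ C * ‖v‖ := (apply_le_norm _ _).trans (hA v hv)
    _ ≤ C * 1 := by gcongr; exact norm_le_of_forall_le hv zero_le_one hv1
    _ = C := mul_one C

lemma leftInverse_of_leftInvOn (hA : MapsTo A (posCone α) (posCone β))
    {B : C₀(β, ℝ) → C₀(α, ℝ)} {σ : α → β} {k : α → ℝ}
    (hrepB : ∀ x, ∀ u ∈ posCone β, B u x = k x * u (σ x)) (hBA : LeftInvOn B A (posCone α)) :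
    Function.LeftInverse τ σ := by
  intro x
  by_contra hne
  obtain ⟨f, hf, -, hfW, hfx⟩ := exists_bump isOpen_compl_singleton (Ne.symm hne)
  have hf0 : f (τ (σ x)) = 0 := image_eq_zero_of_notMem_tsupport fun h => hfW h rfl
  have := congrArg (· x) (hBA hf)
  simp only [hrepB x _ (hA hf), hrep (σ x) f hf, hf0, mul_zero, hfx.self_of_nhds] at this
  exact zero_ne_one this

end WeightedComposition

/-- **Main theorem (necessity).** If `T` is a bijection between the positive cones of
`C₀(X)` and `C₀(Y)` with `‖T(f+g)‖ = ‖Tf + Tg‖` for all `f, g` in the cone, then there is a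
homeomorphism `τ : Y → X` and a continuous function `h : Y → (0, ∞)`, bounded and bounded
away from zero, such that `Tf(y) = h(y) · f(τ(y))`. -/
theorem stmt0 {X Y : Type*} [TopologicalSpace X] [T2Space X] [LocallyCompactSpace X]
    [TopologicalSpace Y] [T2Space Y] [LocallyCompactSpace Y]
    (T : C₀(X, ℝ) → C₀(Y, ℝ))
    (hbij : Set.BijOn T (posCone X) (posCone Y))
    (hnorm : ∀ f ∈ posCone X, ∀ g ∈ posCone X, ‖T (f + g)‖ = ‖T f + T g‖) :
    ∃ (τ : Y ≃ₜ X) (h : Y → ℝ), Continuous h ∧ (∀ y, 0 < h y) ∧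
      (∃ M : ℝ, ∀ y, h y ≤ M) ∧ (∃ c : ℝ, 0 < c ∧ ∀ y, c ≤ h y) ∧
      ∀ f ∈ posCone X, ∀ y : Y, T f y = h y * f (τ y) := by
  set S := Function.invFunOn T (posCone X)
  have hinv : InvOn S T (posCone X) (posCone Y) := hbij.invOn_invFunOn
  have hS : MapsTo S (posCone Y) (posCone X) := (hbij.symm hinv.symm).mapsTo
  have hTadd : ∀ f ∈ posCone X, ∀ g ∈ posCone X, T (f + g) = T f + T g :=
    fun f hf g hg => map_add_of_norm_add hbij.mapsTo hS hinv hnorm hf hg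
  have hSadd : ∀ u ∈ posCone Y, ∀ v ∈ posCone Y, S (u + v) = S u + S v :=
    fun u hu v hv => map_add_of_invOn hTadd hS hinv hu hv
  choose τ c hc hrepT using exists_apply_eq_mul_apply hbij.mapsTo hTadd hS hSadd hinv
  choose σ k hk hrepS using exists_apply_eq_mul_apply hS hSadd hbij.mapsTo hTadd hinv.symm
  obtain ⟨CT, hCT, hCTb⟩ := exists_norm_le_mul_norm_of_add hbij.mapsTo hTadd
  obtain ⟨CS, hCS, hCSb⟩ := exists_norm_le_mul_norm_of_add hS hSadd
  have hτ := continuous_of_apply_eq_mul hrepT hc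
  let φ : Y ≃ₜ X :=
    { toFun := τ
      invFun := σ
      left_inv := leftInverse_of_leftInvOn hrepS hS hrepT hinv.2
      right_inv := leftInverse_of_leftInvOn hrepT hbij.mapsTo hrepS hinv.1
      continuous_toFun := hτ
      continuous_invFun := continuous_of_apply_eq_mul hrepS hk }
  exact ⟨φ, c, continuous_weight_of_apply_eq_mul hrepT hτ, hc,
    ⟨CT, weight_le_of_norm_le hrepT hCT.le hCTb⟩,
    ⟨CS⁻¹, inv_pos.mpr hCS, inv_le_weight_of_rightInvOn hrepT hc hS hinv.2 hCS hCSb⟩,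
    fun f hf y => hrepT y f hf⟩
end

section
/- Let X and Y be locally compact Hausdorff spaces and let T : C₀(X)⁺ → C₀(Y)⁺ be a bijection such that both T and T⁻¹ are additive and order preserving (f ≤ g implies Tf ≤ Tg, and likewise for T⁻¹). Then for every n ∈ ℕ and f₁, …, fₙ ∈ C₀(X)⁺, the pointwise product f₁⋯fₙ is identically zero if and only if Tf₁⋯Tfₙ is identically zero. -/
open scoped ZeroAtInfty

/-- Pointwise minimum in `C₀(X, ℝ)`. -/
noncomputable def pmin {X : Type*} [TopologicalSpace X] (f g : C₀(X, ℝ)) : C₀(X, ℝ) :=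
  { toFun := fun x => min (f x) (g x)
    continuous_toFun := (map_continuous f).min (map_continuous g)
    zero_at_infty' := by
      simpa using (zero_at_infty f).min (zero_at_infty g) }

lemma pmin_apply {X : Type*} [TopologicalSpace X] (f g : C₀(X, ℝ)) (x : X) :
    pmin f g x = min (f x) (g x) := rfl

/-- A nonempty locally compact Hausdorff space admits a nonzero nonnegative `C₀` function. -/
lemma exists_nonzero_posCone {X : Type*} [TopologicalSpace X] [T2Space X]
    [LocallyCompactSpace X] (x : X) :
    ∃ g : C₀(X, ℝ), g ∈ posCone X ∧ g x = 1 := by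
  obtain ⟨f, hf1, -, hfc, hf01⟩ :=
    exists_continuous_one_zero_of_isCompact (isCompact_singleton (x := x))
      isClosed_empty (Set.disjoint_empty _)
  refine ⟨⟨f, hfc.is_zero_at_infty⟩, fun z => (hf01 z).1, ?_⟩
  exact hf1 rfl

/-- **Lemma 2.4.** A bijection between positive cones such that it and its inverse are
additive and order preserving preserves finite disjointness: `f₁ ⋯ fₙ = 0` iff
`Tf₁ ⋯ Tfₙ = 0`. -/
theorem stmt4 {X Y : Type*} [TopologicalSpace X] [T2Space X] [LocallyCompactSpace X]
    [TopologicalSpace Y] [T2Space Y] [LocallyCompactSpace Y]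
    (T : C₀(X, ℝ) → C₀(Y, ℝ)) (S : C₀(Y, ℝ) → C₀(X, ℝ))
    (hbij : Set.BijOn T (posCone X) (posCone Y))
    (hTadd : ∀ f ∈ posCone X, ∀ g ∈ posCone X, T (f + g) = T f + T g)
    (hSadd : ∀ u ∈ posCone Y, ∀ v ∈ posCone Y, S (u + v) = S u + S v)
    (hTord : ∀ f ∈ posCone X, ∀ g ∈ posCone X,
      (∀ x : X, f x ≤ g x) → ∀ y : Y, T f y ≤ T g y)
    (hSord : ∀ u ∈ posCone Y, ∀ v ∈ posCone Y,
      (∀ y : Y, u y ≤ v y) → ∀ x : X, S u x ≤ S v x)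
    (hST : ∀ f ∈ posCone X, S (T f) = f)
    (hTS : ∀ v ∈ posCone Y, T (S v) = v) :
    ∀ (n : ℕ) (f : Fin n → C₀(X, ℝ)), (∀ i, f i ∈ posCone X) →
      ((∀ x : X, ∏ i, f i x = 0) ↔ (∀ y : Y, ∏ i, T (f i) y = 0)) := by
  have h0X : (0 : C₀(X, ℝ)) ∈ posCone X := fun x => le_refl 0
  have h0Y : (0 : C₀(Y, ℝ)) ∈ posCone Y := fun y => le_refl 0
  have hT0 : T 0 = 0 := by
    have := hTadd 0 h0X 0 h0X
    rw [add_zero] at this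
    have h2 : T 0 + 0 = T 0 + T 0 := by rw [add_zero]; exact this
    exact ((add_right_injective (T 0)) h2).symm
  -- pmin stays in the cone
  have hpminX : ∀ f ∈ posCone X, ∀ g ∈ posCone X, pmin f g ∈ posCone X := by
    intro f hf g hg x
    exact le_min (hf x) (hg x)
  have hpminY : ∀ u ∈ posCone Y, ∀ v ∈ posCone Y, pmin u v ∈ posCone Y := by
    intro u hu v hv y
    exact le_min (hu y) (hv y)
  -- key lemma: T (pmin f g) = pmin (T f) (T g)
  have key : ∀ f ∈ posCone X, ∀ g ∈ posCone X,
      ∀ y, T (pmin f g) y = min (T f y) (T g y) := by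
    intro f hf g hg y
    have hp : pmin f g ∈ posCone X := hpminX f hf g hg
    have hle1 : ∀ y, T (pmin f g) y ≤ T f y :=
      hTord _ hp _ hf (fun x => min_le_left _ _)
    have hle2 : ∀ y, T (pmin f g) y ≤ T g y :=
      hTord _ hp _ hg (fun x => min_le_right _ _)
    have hTf : T f ∈ posCone Y := hbij.mapsTo hf
    have hTg : T g ∈ posCone Y := hbij.mapsTo hg
    have hv : pmin (T f) (T g) ∈ posCone Y := hpminY _ hTf _ hTg
    -- S of the min is in the cone
    obtain ⟨f', hf', hTf'⟩ := hbij.surjOn hv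
    have hSv : S (pmin (T f) (T g)) = f' := by rw [← hTf', hST f' hf']
    have hSvmem : S (pmin (T f) (T g)) ∈ posCone X := hSv ▸ hf'
    have h1 : ∀ x, S (pmin (T f) (T g)) x ≤ f x := by
      intro x
      have := hSord _ hv _ hTf (fun y => min_le_left _ _) x
      rwa [hST f hf] at this
    have h2 : ∀ x, S (pmin (T f) (T g)) x ≤ g x := by
      intro x
      have := hSord _ hv _ hTg (fun y => min_le_right _ _) x
      rwa [hST g hg] at this
    have h3 : ∀ x, S (pmin (T f) (T g)) x ≤ pmin f g x :=
      fun x => le_min (h1 x) (h2 x)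
    have h4 : ∀ y, T (S (pmin (T f) (T g))) y ≤ T (pmin f g) y :=
      hTord _ hSvmem _ hp h3
    have h5 := h4 y
    rw [hTS _ hv] at h5
    exact le_antisymm (le_min (hle1 y) (hle2 y)) h5
  intro n f hf
  rcases n with _ | m
  · -- n = 0 : the empty product is 1 everywhere; X is empty iff Y is empty
    simp only [Finset.univ_eq_empty, Finset.prod_empty]
    constructor
    · intro hX y
      by_contra h
      -- Y is nonempty, get a nonzero positive function
      obtain ⟨v, hv, hv1⟩ := exists_nonzero_posCone y
      obtain ⟨g, hg, hTg⟩ := hbij.surjOn hv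
      have hg0 : g = 0 := by
        ext x
        exact absurd (hX x) one_ne_zero
      rw [hg0, hT0] at hTg
      have : v y = 0 := by rw [← hTg]; rfl
      rw [hv1] at this
      norm_num at this
    · intro hY x
      by_contra h
      obtain ⟨g, hg, hg1⟩ := exists_nonzero_posCone x
      have hTg : T g ∈ posCone Y := hbij.mapsTo hg
      have hTg0 : T g = 0 := by
        ext y
        exact absurd (hY y) one_ne_zero
      have : g = 0 := by
        have := hbij.injOn hg h0X (by rw [hTg0, hT0])
        exact this
      rw [this] at hg1
      simpa using hg1
  · -- n = m + 1 : build the pointwise minimum and use the key lemma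
    -- construct m0 with the required four properties by induction on the family size
    have main : ∀ (k : ℕ) (g : Fin (k + 1) → C₀(X, ℝ)), (∀ i, g i ∈ posCone X) →
        ∃ p ∈ posCone X,
          (∀ x i, p x ≤ g i x) ∧ (∀ x, ∃ i, p x = g i x) ∧
          (∀ y i, T p y ≤ T (g i) y) ∧ (∀ y, ∃ i, T p y = T (g i) y) := by
      intro k
      induction k with
      | zero =>
        intro g hg
        refine ⟨g 0, hg 0, fun x i => ?_, fun x => ⟨0, rfl⟩, fun y i => ?_,
          fun y => ⟨0, rfl⟩⟩ <;>
        · rcases Fin.eq_zero_or_eq_succ i with rfl | ⟨j, rfl⟩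
          · exact le_refl _
          · exact j.elim0
      | succ k ih =>
        intro g hg
        obtain ⟨p, hp, hple, hpeq, hTple, hTpeq⟩ := ih (fun i => g i.succ)
          (fun i => hg i.succ)
        refine ⟨pmin (g 0) p, hpminX _ (hg 0) _ hp, ?_, ?_, ?_, ?_⟩
        · intro x i
          rcases Fin.eq_zero_or_eq_succ i with rfl | ⟨j, rfl⟩
          · exact min_le_left _ _
          · exact le_trans (min_le_right _ _) (hple x j)
        · intro x
          rcases min_cases (g 0 x) (p x) with ⟨h, -⟩ | ⟨h, -⟩
          · exact ⟨0, h⟩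
          · obtain ⟨j, hj⟩ := hpeq x
            exact ⟨j.succ, by rw [pmin_apply, h, hj]⟩
        · intro y i
          rw [key _ (hg 0) _ hp y]
          rcases Fin.eq_zero_or_eq_succ i with rfl | ⟨j, rfl⟩
          · exact min_le_left _ _
          · exact le_trans (min_le_right _ _) (hTple y j)
        · intro y
          rw [key _ (hg 0) _ hp y]
          rcases min_cases (T (g 0) y) (T p y) with ⟨h, -⟩ | ⟨h, -⟩
          · exact ⟨0, h⟩
          · obtain ⟨j, hj⟩ := hTpeq y
            exact ⟨j.succ, by rw [h, hj]⟩
    obtain ⟨p, hp, hple, hpeq, hTple, hTpeq⟩ := main m f hf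
    have hTp : T p ∈ posCone Y := hbij.mapsTo hp
    -- product = 0 everywhere iff p = 0
    have hXiff : (∀ x : X, ∏ i, f i x = 0) ↔ p = 0 := by
      constructor
      · intro hX
        ext x
        obtain ⟨i, -, hi⟩ := Finset.prod_eq_zero_iff.mp (hX x)
        have h1 : p x ≤ 0 := hi ▸ hple x i
        exact le_antisymm h1 (hp x)
      · intro hp0 x
        obtain ⟨i, hi⟩ := hpeq x
        rw [hp0] at hi
        exact Finset.prod_eq_zero (Finset.mem_univ i) hi.symm
    have hYiff : (∀ y : Y, ∏ i, T (f i) y = 0) ↔ T p = 0 := by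
      constructor
      · intro hY
        ext y
        obtain ⟨i, -, hi⟩ := Finset.prod_eq_zero_iff.mp (hY y)
        have h1 : T p y ≤ 0 := hi ▸ hTple y i
        exact le_antisymm h1 (hTp y)
      · intro hp0 y
        obtain ⟨i, hi⟩ := hTpeq y
        rw [hp0] at hi
        exact Finset.prod_eq_zero (Finset.mem_univ i) hi.symm
    rw [hXiff, hYiff]
    constructor
    · intro h; rw [h, hT0]
    · intro h
      exact hbij.injOn hp h0X (by rw [h, hT0])
end

section
/- Let X and Y be locally compact Hausdorff spaces and let T : C₀(X)⁺ → C₀(Y)⁺ be a surjective map that is additive, positively homogeneous, order preserving, and Lipschitz (there exists M > 0 with ‖Tf − Tg‖ ≤ M‖f − g‖ for all f, g ∈ C₀(X)⁺). Then for each y ∈ Y there exists f ∈ C₀(X)⁺ with compact support such that Tf(y) > 0. -/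
/-!
By surjectivity, pick `g ∈ C₀(X)⁺` whose image is a bump function equal to `1` at `y`.
The truncation `(g - ε)⁺` has compact support, because `g` vanishes at infinity, and it is
uniformly `ε`-close to `g`. For `ε = 1 / (2M)` the Lipschitz bound then forces
`T((g - ε)⁺)(y) ≥ Tg(y) - Mε = 1 / 2`.
-/

open scoped ZeroAtInfty

open Filter

namespace ZeroAtInftyContinuousMap

variable {X : Type*} [TopologicalSpace X]

theorem norm_apply_le_norm {E : Type*} [SeminormedAddCommGroup E] (f : C₀(X, E)) (x : X) :
    ‖f x‖ ≤ ‖f‖ := by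
  rw [← norm_toBCF_eq_norm]
  exact f.toBCF.norm_coe_le_norm x

theorem isCompact_setOf_le_norm {E : Type*} [SeminormedAddCommGroup E] (f : C₀(X, E))
    {ε : ℝ} (hε : 0 < ε) : IsCompact {x | ε ≤ ‖f x‖} := by
  have hsmall : {x | ‖f x‖ < ε} ∈ cocompact X :=
    (tendsto_zero_iff_norm_tendsto_zero.mp (zero_at_infty f)).eventually (gt_mem_nhds hε)
  obtain ⟨K, hK, hsub⟩ := mem_cocompact'.mp hsmall
  exact hK.of_isClosed_subset (isClosed_le continuous_const (map_continuous f).norm)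
    fun x (hx : ε ≤ ‖f x‖) => hsub (not_lt.mpr hx)

def subConstPosPart (g : C₀(X, ℝ)) {ε : ℝ} (hε : 0 ≤ ε) : C₀(X, ℝ) where
  toFun x := max (g x - ε) 0
  continuous_toFun := by fun_prop
  zero_at_infty' := by
    simpa [hε] using ((zero_at_infty g).sub_const ε).max (tendsto_const_nhds (x := (0 : ℝ)))

variable (g : C₀(X, ℝ)) {ε : ℝ}

@[simp]
theorem subConstPosPart_apply (hε : 0 ≤ ε) (x : X) :
    g.subConstPosPart hε x = max (g x - ε) 0 :=
  rfl

theorem subConstPosPart_mem_posCone (hε : 0 ≤ ε) : g.subConstPosPart hε ∈ posCone X :=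
  fun _ => le_max_right _ _

theorem hasCompactSupport_subConstPosPart (hε : 0 < ε) :
    HasCompactSupport (g.subConstPosPart hε.le) := by
  refine .intro' (g.isCompact_setOf_le_norm hε)
    (isClosed_le continuous_const (map_continuous g).norm) fun x hx => ?_
  have : g x < ε := (le_abs_self (g x)).trans_lt (not_le.mp hx)
  simp only [subConstPosPart_apply, max_eq_right_iff]
  linarith

theorem norm_sub_subConstPosPart_le (hg : g ∈ posCone X) (hε : 0 ≤ ε) :
    ‖g - g.subConstPosPart hε‖ ≤ ε := by
  rw [← norm_toBCF_eq_norm, BoundedContinuousFunction.norm_le hε]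
  intro x
  have hgx := hg x
  change |g x - max (g x - ε) 0| ≤ ε
  rcases max_cases (g x - ε) 0 with ⟨hmax, hcmp⟩ | ⟨hmax, hcmp⟩ <;> rw [hmax, abs_le] <;>
    constructor <;> linarith

end ZeroAtInftyContinuousMap

theorem exists_mem_posCone_apply_eq_one {Y : Type*} [TopologicalSpace Y] [RegularSpace Y]
    [LocallyCompactSpace Y] (y : Y) : ∃ h ∈ posCone Y, h y = 1 := by
  obtain ⟨φ, hφy, -, hφc, hφ⟩ :=
    exists_continuous_one_zero_of_isCompact isCompact_singleton isClosed_empty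
      (Set.disjoint_empty {y})
  exact ⟨⟨φ, hφc.is_zero_at_infty⟩, fun z => (hφ z).1, hφy rfl⟩

theorem stmt8_general {X Y : Type*} [TopologicalSpace X]
    [TopologicalSpace Y] [T2Space Y] [LocallyCompactSpace Y]
    (T : C₀(X, ℝ) → C₀(Y, ℝ))
    (hsurj : Set.SurjOn T (posCone X) (posCone Y))
    (M : ℝ) (hM : 0 < M)
    (hlip : ∀ f ∈ posCone X, ∀ g ∈ posCone X, ‖T f - T g‖ ≤ M * ‖f - g‖) :
    ∀ y : Y, ∃ f ∈ posCone X, HasCompactSupport (⇑f : X → ℝ) ∧ 0 < T f y := by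
  intro y
  obtain ⟨h, hh, hy⟩ := exists_mem_posCone_apply_eq_one y
  obtain ⟨g, hg, rfl⟩ := hsurj hh
  have hε : 0 < (2 * M)⁻¹ := by positivity
  set f := g.subConstPosPart hε.le
  have hf : f ∈ posCone X := g.subConstPosPart_mem_posCone hε.le
  refine ⟨f, hf, g.hasCompactSupport_subConstPosPart hε, ?_⟩
  have hclose : T g y - T f y ≤ 1 / 2 := calc
    T g y - T f y ≤ ‖T g - T f‖ := (le_abs_self _).trans ((T g - T f).norm_apply_le_norm y)
    _ ≤ M * ‖g - f‖ := hlip g hg f hf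
    _ ≤ M * (2 * M)⁻¹ := by gcongr; exact g.norm_sub_subConstPosPart_le hg hε.le
    _ = 1 / 2 := by field_simp
  linarith

/-- **Lemma 2.9.** For a surjective, additive, positively homogeneous, order preserving,
Lipschitz map `T : C₀(X)⁺ → C₀(Y)⁺` and each `y ∈ Y`, there is a compactly supported
`f ∈ C₀(X)⁺` with `Tf(y) > 0`. -/
theorem stmt8 {X Y : Type*} [TopologicalSpace X] [T2Space X] [LocallyCompactSpace X]
    [TopologicalSpace Y] [T2Space Y] [LocallyCompactSpace Y]
    (T : C₀(X, ℝ) → C₀(Y, ℝ))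
    (hmap : ∀ f ∈ posCone X, T f ∈ posCone Y)
    (hsurj : Set.SurjOn T (posCone X) (posCone Y))
    (hTadd : ∀ f ∈ posCone X, ∀ g ∈ posCone X, T (f + g) = T f + T g)
    (hThom : ∀ r : ℝ, 0 ≤ r → ∀ f ∈ posCone X, T (r • f) = r • T f)
    (hTord : ∀ f ∈ posCone X, ∀ g ∈ posCone X,
      (∀ x : X, f x ≤ g x) → ∀ y : Y, T f y ≤ T g y)
    (M : ℝ) (hM : 0 < M)
    (hlip : ∀ f ∈ posCone X, ∀ g ∈ posCone X, ‖T f - T g‖ ≤ M * ‖f - g‖) :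
    ∀ y : Y, ∃ f ∈ posCone X, HasCompactSupport (⇑f : X → ℝ) ∧ 0 < T f y :=
  stmt8_general T hsurj M hM hlip
end

section
/- Let X and Y be locally compact Hausdorff spaces, let T : C₀(X)⁺ → C₀(Y)⁺ be a bijection satisfying ‖T(f+g)‖ = ‖Tf + Tg‖ for all f, g ∈ C₀(X)⁺, and let τ : Y → X be the map with ⋂_{f ∈ F_y} supp(f) = {τ(y)} for each y ∈ Y, where F_y = {f ∈ C₀(X)⁺ : Tf(y) > 0}. Then τ is continuous. -/
open scoped ZeroAtInfty
open Filter Topology Set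

namespace Stmt11Helpers

variable {Z : Type*} [TopologicalSpace Z]

lemma apply_le_norm (f : C₀(Z, ℝ)) (z : Z) : f z ≤ ‖f‖ := by
  have h := BoundedContinuousFunction.norm_coe_le_norm f.toBCF z
  rw [ZeroAtInftyContinuousMap.norm_toBCF_eq_norm] at h
  calc f z ≤ |f z| := le_abs_self _
  _ = ‖f.toBCF z‖ := (Real.norm_eq_abs _).symm
  _ ≤ ‖f‖ := h

lemma norm_le_of (f : C₀(Z, ℝ)) {C : ℝ} (hC : 0 ≤ C) (h : ∀ z, |f z| ≤ C) : ‖f‖ ≤ C := by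
  rw [← ZeroAtInftyContinuousMap.norm_toBCF_eq_norm]
  exact (BoundedContinuousFunction.norm_le hC).mpr fun z => by
    simpa [Real.norm_eq_abs] using h z

/-- A bump function in `C₀(Z, ℝ)` for a locally compact Hausdorff space:
equal to `1` on a neighbourhood of `z`, valued in `[0,1]`, with closed support inside `V`. -/
lemma exists_bump [T2Space Z] [LocallyCompactSpace Z]
    {V : Set Z} (hV : IsOpen V) {z : Z} (hz : z ∈ V) :
    ∃ w : C₀(Z, ℝ), (∀ t, 0 ≤ w t) ∧ (∀ t, w t ≤ 1) ∧ tsupport ⇑w ⊆ V ∧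
      ∃ N : Set Z, IsOpen N ∧ z ∈ N ∧ Set.EqOn (⇑w) 1 N := by
  obtain ⟨K, hKcomp, hzK, hKV⟩ := exists_compact_subset hV hz
  obtain ⟨K', hK'comp, hKK', hK'V⟩ := exists_compact_between hKcomp hV hKV
  have hd : Disjoint K (interior K')ᶜ := by
    rw [Set.disjoint_compl_right_iff_subset]
    exact hKK'
  obtain ⟨f, hf1, hf0, _, hf01⟩ :=
    exists_continuous_one_zero_of_isCompact hKcomp (isOpen_interior.isClosed_compl) hd
  have hsupp : tsupport ⇑f ⊆ K' := by
    have h1 : Function.support ⇑f ⊆ interior K' := by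
      intro t ht
      by_contra hcon
      exact ht (hf0 hcon)
    calc tsupport ⇑f ⊆ closure (interior K') := closure_mono h1
    _ ⊆ closure K' := closure_mono interior_subset
    _ = K' := hK'comp.isClosed.closure_eq
  have hcs : HasCompactSupport ⇑f := hK'comp.of_isClosed_subset (isClosed_tsupport _) hsupp
  refine ⟨⟨f, hcs.is_zero_at_infty⟩, fun t => (hf01 t).1, fun t => (hf01 t).2,
    hsupp.trans hK'V, interior K, isOpen_interior, hzK, fun t ht => hf1 (interior_subset ht)⟩

end Stmt11Helpers

/-- **Lemma 2.12.** For a norm additive bijection `T` between positive cones, the point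
map `τ : Y → X` defined by `⋂_{f ∈ F_y} supp(f) = {τ(y)}` is continuous. -/
theorem stmt11 {X Y : Type*} [TopologicalSpace X] [T2Space X] [LocallyCompactSpace X]
    [TopologicalSpace Y] [T2Space Y] [LocallyCompactSpace Y]
    (T : C₀(X, ℝ) → C₀(Y, ℝ))
    (hbij : Set.BijOn T (posCone X) (posCone Y))
    (hnorm : ∀ f ∈ posCone X, ∀ g ∈ posCone X, ‖T (f + g)‖ = ‖T f + T g‖)
    (τ : Y → X)
    (hτ : ∀ y : Y,
      (⋂ f ∈ {g : C₀(X, ℝ) | g ∈ posCone X ∧ 0 < T g y}, tsupport (⇑f : X → ℝ))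
        = {τ y}) :
    Continuous τ := by
  classical
  -- Basic facts
  have hadd : ∀ f ∈ posCone X, ∀ g ∈ posCone X, f + g ∈ posCone X := by
    intro f hf g hg x
    simp only [ZeroAtInftyContinuousMap.add_apply]
    exact add_nonneg (hf x) (hg x)
  have hmemT : ∀ f ∈ posCone X, T f ∈ posCone Y := fun f hf => hbij.mapsTo hf
  have hS : ∀ u ∈ posCone Y, ∃ q ∈ posCone X, T q = u := by
    intro u hu
    obtain ⟨q, hq, hTq⟩ := hbij.surjOn hu
    exact ⟨q, hq, hTq⟩
  -- τ y belongs to the support of every `f` with `T f y > 0`.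
  have hsupp : ∀ (y : Y) (f : C₀(X, ℝ)), f ∈ posCone X → 0 < T f y →
      τ y ∈ tsupport (⇑f : X → ℝ) := by
    intro y f hf hTf
    have h0 : τ y ∈ ({τ y} : Set X) := rfl
    rw [← hτ y] at h0
    exact Set.mem_iInter₂.mp h0 f ⟨hf, hTf⟩
  -- Lemma A (split bound): `T (a + b) y ≤ T a y + ‖T b‖`.
  have lemA : ∀ a ∈ posCone X, ∀ b ∈ posCone X, ∀ y₁ : Y,
      T (a + b) y₁ ≤ T a y₁ + ‖T b‖ := by
    intro a ha b hb y₁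
    have key : ∀ ε : ℝ, 0 < ε → T (a + b) y₁ ≤ (T a y₁ + ‖T b‖) + ε := by
      intro ε hε
      set V : Set Y := {y | T a y < T a y₁ + ε} with hVdef
      have hVopen : IsOpen V := isOpen_lt (map_continuous (T a)) continuous_const
      have hy₁V : y₁ ∈ V := by
        show T a y₁ < T a y₁ + ε
        linarith
      obtain ⟨w, hw0, hw1, hwsupp, N, hNopen, hy₁N, hwN⟩ := Stmt11Helpers.exists_bump hVopen hy₁V
      set M : ℝ := ‖T a‖ with hMdef
      have hM0 : (0 : ℝ) ≤ M := norm_nonneg _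
      have hMw : M • w ∈ posCone Y := by
        intro z
        simp only [ZeroAtInftyContinuousMap.smul_apply, smul_eq_mul]
        exact mul_nonneg hM0 (hw0 z)
      obtain ⟨q, hq, hTq⟩ := hS (M • w) hMw
      have hTay₁ : 0 ≤ T a y₁ := hmemT a ha y₁
      have hw_y₁ : w y₁ = 1 := hwN hy₁N
      -- lower bound
      have hlow : T (a + b) y₁ + M ≤ ‖T (a + b) + T q‖ := by
        rw [hTq]
        have h := Stmt11Helpers.apply_le_norm (T (a + b) + M • w) y₁
        simp only [ZeroAtInftyContinuousMap.add_apply,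
          ZeroAtInftyContinuousMap.smul_apply, smul_eq_mul, hw_y₁, mul_one] at h
        linarith
      have he1 : ‖T (a + b) + T q‖ = ‖T ((a + b) + q)‖ := (hnorm _ (hadd a ha b hb) _ hq).symm
      have he2 : (a + b) + q = b + (a + q) := by abel
      have he3 : ‖T (b + (a + q))‖ = ‖T b + T (a + q)‖ := hnorm _ hb _ (hadd a ha q hq)
      have he4 : ‖T (a + q)‖ = ‖T a + T q‖ := hnorm _ ha _ hq
      -- upper bound on ‖T a + T q‖
      have hup : ‖T a + T q‖ ≤ (T a y₁ + ε) + M := by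
        apply Stmt11Helpers.norm_le_of
        · linarith
        · intro y
          have hTay : 0 ≤ T a y := hmemT a ha y
          have hqy : 0 ≤ T q y := by
            rw [hTq]
            exact hMw y
          rw [abs_of_nonneg (by simp only [ZeroAtInftyContinuousMap.add_apply]; linarith)]
          simp only [ZeroAtInftyContinuousMap.add_apply, hTq,
            ZeroAtInftyContinuousMap.smul_apply, smul_eq_mul]
          by_cases hy : y ∈ tsupport ⇑w
          · have hyV : y ∈ V := hwsupp hy
            have h1 : T a y < T a y₁ + ε := hyV
            have h2 : M * w y ≤ M := mul_le_of_le_one_right hM0 (hw1 y)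
            linarith
          · have hwy : w y = 0 := image_eq_zero_of_notMem_tsupport hy
            have h1 : T a y ≤ M := Stmt11Helpers.apply_le_norm (T a) y
            rw [hwy, mul_zero]
            linarith
      have hnb : ‖T b + T (a + q)‖ ≤ ‖T b‖ + ‖T (a + q)‖ := norm_add_le _ _
      have hfin : T (a + b) y₁ + M ≤ ‖T b‖ + ((T a y₁ + ε) + M) := by
        calc T (a + b) y₁ + M ≤ ‖T (a + b) + T q‖ := hlow
        _ = ‖T (b + (a + q))‖ := by rw [he1, he2]
        _ ≤ ‖T b‖ + ‖T (a + q)‖ := by rw [he3] at *; exact hnb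
        _ = ‖T b‖ + ‖T a + T q‖ := by rw [he4]
        _ ≤ ‖T b‖ + ((T a y₁ + ε) + M) := by linarith
      linarith
    exact le_of_forall_pos_le_add key
  -- Pointwise subadditivity: `T (a + b) y ≤ T a y + T b y`.
  have subadd : ∀ a ∈ posCone X, ∀ b ∈ posCone X, ∀ y₁ : Y,
      T (a + b) y₁ ≤ T a y₁ + T b y₁ := by
    intro a ha b hb y₁
    have key : ∀ ε : ℝ, 0 < ε → T (a + b) y₁ ≤ (T a y₁ + T b y₁) + ε := by
      intro ε hε
      have hε2 : 0 < ε / 2 := by linarith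
      set V : Set Y := {y | T a y < T a y₁ + ε / 2} ∩ {y | T b y < T b y₁ + ε / 2} with hVdef
      have hVopen : IsOpen V :=
        (isOpen_lt (map_continuous (T a)) continuous_const).inter
          (isOpen_lt (map_continuous (T b)) continuous_const)
      have hy₁V : y₁ ∈ V := by
        constructor
        · show T a y₁ < T a y₁ + ε / 2
          linarith
        · show T b y₁ < T b y₁ + ε / 2
          linarith
      obtain ⟨w, hw0, hw1, hwsupp, N, hNopen, hy₁N, hwN⟩ := Stmt11Helpers.exists_bump hVopen hy₁V
      set Nc : ℝ := ‖T a‖ + ‖T b‖ with hNcdef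
      have hTa0 : (0 : ℝ) ≤ ‖T a‖ := norm_nonneg _
      have hTb0 : (0 : ℝ) ≤ ‖T b‖ := norm_nonneg _
      have hNc0 : (0 : ℝ) ≤ Nc := by rw [hNcdef]; linarith
      have hNw : Nc • w ∈ posCone Y := by
        intro z
        simp only [ZeroAtInftyContinuousMap.smul_apply, smul_eq_mul]
        exact mul_nonneg hNc0 (hw0 z)
      obtain ⟨q, hq, hTq⟩ := hS (Nc • w) hNw
      have hbq : b + q ∈ posCone X := hadd b hb q hq
      set B : C₀(Y, ℝ) := T (b + q) with hBdef
      have hTay₁ : 0 ≤ T a y₁ := hmemT a ha y₁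
      have hTby₁ : 0 ≤ T b y₁ := hmemT b hb y₁
      have hw_y₁ : w y₁ = 1 := hwN hy₁N
      -- (i): pointwise bound on B
      have hBpt : ∀ y : Y, B y ≤ Nc * w y + ‖T b‖ := by
        intro y
        have h := lemA q hq b hb y
        have heq : q + b = b + q := by abel
        rw [heq] at h
        rw [hTq] at h
        simpa only [ZeroAtInftyContinuousMap.smul_apply, smul_eq_mul] using h
      -- (ii): norm bound on B
      have hBnorm : ‖B‖ ≤ (T b y₁ + ε / 2) + Nc := by
        have he : ‖B‖ = ‖T b + T q‖ := hnorm _ hb _ hq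
        rw [he]
        apply Stmt11Helpers.norm_le_of
        · linarith
        · intro y
          have hTby : 0 ≤ T b y := hmemT b hb y
          have hqy : 0 ≤ T q y := by rw [hTq]; exact hNw y
          rw [abs_of_nonneg (by simp only [ZeroAtInftyContinuousMap.add_apply]; linarith)]
          simp only [ZeroAtInftyContinuousMap.add_apply, hTq,
            ZeroAtInftyContinuousMap.smul_apply, smul_eq_mul]
          by_cases hy : y ∈ tsupport ⇑w
          · have hyV : y ∈ V := hwsupp hy
            have h1 : T b y < T b y₁ + ε / 2 := hyV.2
            have h2 : Nc * w y ≤ Nc := mul_le_of_le_one_right hNc0 (hw1 y)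
            exact add_le_add h1.le h2
          · have hwy : w y = 0 := image_eq_zero_of_notMem_tsupport hy
            have h1 : T b y ≤ ‖T b‖ := Stmt11Helpers.apply_le_norm (T b) y
            rw [hwy, mul_zero]
            rw [hNcdef]
            linarith
      -- lower bound
      have hlow : T (a + b) y₁ + Nc ≤ ‖T (a + b) + T q‖ := by
        rw [hTq]
        have h := Stmt11Helpers.apply_le_norm (T (a + b) + Nc • w) y₁
        simp only [ZeroAtInftyContinuousMap.add_apply,
          ZeroAtInftyContinuousMap.smul_apply, smul_eq_mul, hw_y₁, mul_one] at h
        linarith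
      have he1 : ‖T (a + b) + T q‖ = ‖T ((a + b) + q)‖ := (hnorm _ (hadd a ha b hb) _ hq).symm
      have he2 : (a + b) + q = a + (b + q) := by abel
      have he3 : ‖T (a + (b + q))‖ = ‖T a + B‖ := hnorm _ ha _ hbq
      -- upper bound on ‖T a + B‖
      have hup : ‖T a + B‖ ≤ (T a y₁ + T b y₁ + ε) + Nc := by
        apply Stmt11Helpers.norm_le_of
        · linarith
        · intro y
          have hTay : 0 ≤ T a y := hmemT a ha y
          have hBy : 0 ≤ B y := hbij.mapsTo hbq y
          rw [abs_of_nonneg (by simp only [ZeroAtInftyContinuousMap.add_apply]; linarith)]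
          simp only [ZeroAtInftyContinuousMap.add_apply]
          by_cases hy : y ∈ tsupport ⇑w
          · have hyV : y ∈ V := hwsupp hy
            have h1 : T a y < T a y₁ + ε / 2 := hyV.1
            have h2 : B y ≤ ‖B‖ := Stmt11Helpers.apply_le_norm B y
            linarith
          · have hwy : w y = 0 := image_eq_zero_of_notMem_tsupport hy
            have h1 : B y ≤ Nc * w y + ‖T b‖ := hBpt y
            rw [hwy, mul_zero, zero_add] at h1
            have h2 : T a y ≤ ‖T a‖ := Stmt11Helpers.apply_le_norm (T a) y
            rw [hNcdef]
            linarith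
      have hfin : T (a + b) y₁ + Nc ≤ (T a y₁ + T b y₁ + ε) + Nc := by
        calc T (a + b) y₁ + Nc ≤ ‖T (a + b) + T q‖ := hlow
        _ = ‖T a + B‖ := by rw [he1, he2, he3]
        _ ≤ (T a y₁ + T b y₁ + ε) + Nc := hup
      linarith
    exact le_of_forall_pos_le_add key
  -- Continuity
  refine continuous_iff_continuousAt.mpr fun y₀ => ?_
  refine Filter.tendsto_def.mpr fun A hA => ?_
  obtain ⟨U, hUA, hUopen, hy₀U⟩ := mem_nhds_iff.mp hA
  by_cases hex : ∃ g, g ∈ posCone X ∧ 0 < T g y₀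
  · obtain ⟨g, hg, hTg⟩ := hex
    obtain ⟨χ, hχ0, hχ1, hχsupp, Nx, hNxopen, hx₀Nx, hχN⟩ :=
      Stmt11Helpers.exists_bump hUopen hy₀U
    -- f₀ = g * χ as an element of C₀(X, ℝ)
    have hcont : Continuous fun x => g x * χ x := (map_continuous g).mul (map_continuous χ)
    have hzero : Tendsto (fun x => g x * χ x) (cocompact X) (𝓝 0) := by
      have h0 : Tendsto (fun _ : X => (0:ℝ)) (cocompact X) (𝓝 0) := tendsto_const_nhds
      have hgz : Tendsto (fun x => g x) (cocompact X) (𝓝 0) := zero_at_infty g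
      refine tendsto_of_tendsto_of_tendsto_of_le_of_le h0 hgz ?_ ?_
      · intro x
        exact mul_nonneg (hg x) (hχ0 x)
      · intro x
        exact mul_le_of_le_one_right (hg x) (hχ1 x)
    set f₀ : C₀(X, ℝ) := ⟨⟨fun x => g x * χ x, hcont⟩, hzero⟩ with hf₀def
    have hf₀apply : ∀ x, f₀ x = g x * χ x := fun x => rfl
    have hf₀ : f₀ ∈ posCone X := fun x => mul_nonneg (hg x) (hχ0 x)
    have hr : g - f₀ ∈ posCone X := by
      intro x
      simp only [ZeroAtInftyContinuousMap.sub_apply, hf₀apply]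
      have h := mul_nonneg (hg x) (sub_nonneg.mpr (hχ1 x))
      nlinarith
    have hf₀supp : tsupport ⇑f₀ ⊆ U := by
      refine (closure_mono ?_).trans hχsupp
      intro x hx
      simp only [Function.mem_support, hf₀apply] at hx
      simp only [Function.mem_support]
      intro h0
      exact hx (by rw [h0, mul_zero])
    -- T (g - f₀) y₀ = 0
    have hvan : ∀ x ∈ Nx, (g - f₀) x = 0 := by
      intro x hxN
      have h1 : χ x = 1 := hχN hxN
      simp only [ZeroAtInftyContinuousMap.sub_apply, hf₀apply, h1, mul_one, sub_self]
    have hTr0 : T (g - f₀) y₀ = 0 := by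
      by_contra hne
      have hpos : 0 < T (g - f₀) y₀ := lt_of_le_of_ne (hbij.mapsTo hr y₀) (Ne.symm hne)
      have hx₀ : τ y₀ ∈ tsupport ⇑(g - f₀) := hsupp y₀ _ hr hpos
      have hsub : tsupport ⇑(g - f₀) ⊆ Nxᶜ := by
        refine closure_minimal ?_ hNxopen.isClosed_compl
        intro x hx
        simp only [Function.mem_support] at hx
        intro hxN
        exact hx (hvan x hxN)
      exact (hsub hx₀) hx₀Nx
    have hgeq : f₀ + (g - f₀) = g := by abel
    have hkey : T g y₀ ≤ T f₀ y₀ + T (g - f₀) y₀ := by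
      have h := subadd f₀ hf₀ (g - f₀) hr y₀
      rw [hgeq] at h
      exact h
    have hTf₀pos : 0 < T f₀ y₀ := by
      rw [hTr0] at hkey
      linarith
    set W : Set Y := {y | 0 < T f₀ y} with hWdef
    have hWopen : IsOpen W := isOpen_lt continuous_const (map_continuous (T f₀))
    have hy₀W : y₀ ∈ W := hTf₀pos
    have hWsub : W ⊆ τ ⁻¹' A := by
      intro y hy
      have hmem : τ y ∈ tsupport ⇑f₀ := hsupp y f₀ hf₀ hy
      exact Set.mem_preimage.mpr (hUA (hf₀supp hmem))
    exact Filter.mem_of_superset (hWopen.mem_nhds hy₀W) hWsub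
  · -- F_{y₀} is empty: X = {τ y₀}
    have huniv : (Set.univ : Set X) ⊆ {τ y₀} := by
      intro x _
      rw [← hτ y₀]
      apply Set.mem_iInter₂.mpr
      intro f hf
      exact absurd ⟨f, hf.1, hf.2⟩ hex
    have hall : ∀ y : Y, τ y = τ y₀ := fun y => huniv (Set.mem_univ (τ y))
    have hpre : τ ⁻¹' A = Set.univ := by
      apply Set.eq_univ_of_forall
      intro y
      simp only [Set.mem_preimage, hall y]
      exact hUA hy₀U
    rw [hpre]
    exact Filter.univ_mem
end

section
/- Let X and Y be locally compact Hausdorff spaces and let T : C₀(X)⁺ → C₀(Y)⁺ be a bijection satisfying ‖T(f+g)‖ = ‖Tf + Tg‖ for all f, g ∈ C₀(X)⁺. Then the map τ : Y → X determined by ⋂_{f ∈ F_y} supp(f) = {τ(y)} for each y ∈ Y, where F_y = {f ∈ C₀(X)⁺ : Tf(y) > 0}, is a homeomorphism from Y onto X; its inverse is the map σ : X → Y determined analogously from T⁻¹, i.e., ⋂_{v ∈ G_x} supp(v) = {σ(x)} where G_x = {v ∈ C₀(Y)⁺ : T⁻¹v(x) > 0}. -/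
open scoped ZeroAtInfty
open Set Filter Topology ZeroAtInftyContinuousMap

namespace Stmt12Helpers

variable {Z : Type*} [TopologicalSpace Z]

theorem c0_abs_eval_le_norm (u : C₀(Z, ℝ)) (z : Z) : |u z| ≤ ‖u‖ := by
  have h2 : ‖u.toBCF z‖ ≤ ‖u.toBCF‖ := BoundedContinuousFunction.norm_coe_le_norm _ _
  rwa [norm_toBCF_eq_norm, Real.norm_eq_abs] at h2

theorem c0_eval_le_norm (u : C₀(Z, ℝ)) (z : Z) : u z ≤ ‖u‖ :=
  (le_abs_self _).trans (c0_abs_eval_le_norm u z)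

theorem c0_norm_le (u : C₀(Z, ℝ)) {M : ℝ} (hM : 0 ≤ M) (h : ∀ z, |u z| ≤ M) : ‖u‖ ≤ M := by
  rw [← norm_toBCF_eq_norm]
  exact (BoundedContinuousFunction.norm_le hM).mpr fun z => by
    simpa [Real.norm_eq_abs] using h z

theorem c0_norm_nonneg (u : C₀(Z, ℝ)) : 0 ≤ ‖u‖ := norm_nonneg u

theorem c0_exists_norm_eq (u : C₀(Z, ℝ)) (hu : ∀ z, 0 ≤ u z) (hpos : 0 < ‖u‖) :
    ∃ z, u z = ‖u‖ := by
  have h2 : (0:ℝ) < ‖u‖ / 2 := by linarith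
  have hten : Tendsto ⇑u (cocompact Z) (𝓝 0) := zero_at_infty u
  have hev : ∀ᶠ z in cocompact Z, dist (u z) 0 < ‖u‖ / 2 :=
    (Metric.tendsto_nhds.mp hten) _ h2
  obtain ⟨K, hK, hKsub⟩ := mem_cocompact.mp hev
  have hsmall : ∀ z ∉ K, u z ≤ ‖u‖ / 2 := by
    intro z hz
    have := hKsub hz
    simp only [mem_setOf_eq, Real.dist_eq, sub_zero] at this
    calc u z ≤ |u z| := le_abs_self _
      _ ≤ ‖u‖ / 2 := this.le
  rcases K.eq_empty_or_nonempty with rfl | hne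
  · exfalso
    have : ‖u‖ ≤ ‖u‖ / 2 := c0_norm_le u h2.le fun z => by
      rw [abs_of_nonneg (hu z)]; exact hsmall z (by simp)
    linarith
  · obtain ⟨z₀, hz₀K, hz₀max⟩ := hK.exists_isMaxOn hne (map_continuous u).continuousOn
    refine ⟨z₀, le_antisymm (c0_eval_le_norm u z₀) ?_⟩
    have hbound : ‖u‖ ≤ max (u z₀) (‖u‖ / 2) := by
      apply c0_norm_le u (le_max_of_le_right h2.le)
      intro z
      rw [abs_of_nonneg (hu z)]
      by_cases hz : z ∈ K
      · exact le_max_of_le_left (hz₀max hz)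
      · exact le_max_of_le_right (hsmall z hz)
    rcases max_cases (u z₀) (‖u‖ / 2) with ⟨heq, _⟩ | ⟨heq, _⟩
    · rwa [heq] at hbound
    · rw [heq] at hbound; linarith

theorem exists_bump [T2Space Z] [LocallyCompactSpace Z] {K U : Set Z} (hK : IsCompact K)
    (hU : IsOpen U) (hKU : K ⊆ U) :
    ∃ w : C₀(Z, ℝ), (∀ z, 0 ≤ w z) ∧ (∀ z, w z ≤ 1) ∧ (∀ z ∈ K, w z = 1) ∧
      tsupport ⇑w ⊆ U := by
  obtain ⟨L, hLc, hLcl, hKL, hLU⟩ := exists_compact_closed_between hK hU hKU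
  have hdisj : Disjoint K (interior L)ᶜ := by
    rw [disjoint_compl_right_iff_subset]; exact hKL
  obtain ⟨f, hf1, hf0, hfc, hficc⟩ :=
    exists_continuous_one_zero_of_isCompact hK isOpen_interior.isClosed_compl hdisj
  refine ⟨⟨f, HasCompactSupport.is_zero_at_infty hfc⟩, ?_, ?_, ?_, ?_⟩
  · intro z; exact (hficc z).1
  · intro z; exact (hficc z).2
  · intro z hz; exact hf1 hz
  · have hcoz : {z | f z ≠ 0} ⊆ L := by
      intro z hz
      by_contra hzL
      exact hz (hf0 (by simp only [mem_compl_iff]; intro hzi; exact hzL (interior_subset hzi)))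
    calc tsupport ⇑f ⊆ closure L := closure_mono hcoz
      _ = L := hLcl.closure_eq
      _ ⊆ U := hLU

theorem exists_bump_pt [T2Space Z] [LocallyCompactSpace Z] {U : Set Z} (hU : IsOpen U)
    {z₀ : Z} (hz₀ : z₀ ∈ U) :
    ∃ w : C₀(Z, ℝ), (∀ z, 0 ≤ w z) ∧ (∀ z, w z ≤ 1) ∧ w z₀ = 1 ∧ tsupport ⇑w ⊆ U := by
  obtain ⟨w, h1, h2, h3, h4⟩ := exists_bump isCompact_singleton hU (singleton_subset_iff.mpr hz₀)
  exact ⟨w, h1, h2, h3 z₀ rfl, h4⟩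

end Stmt12Helpers

open Stmt12Helpers

/-- **Lemma 2.13.** For a norm additive bijection `T` between positive cones, the point
map `τ : Y → X` (defined by `⋂_{f ∈ F_y} supp(f) = {τ(y)}`) is a homeomorphism, whose
inverse is the point map `σ : X → Y` obtained analogously from `T⁻¹`. -/
theorem stmt12 {X Y : Type*} [TopologicalSpace X] [T2Space X] [LocallyCompactSpace X]
    [TopologicalSpace Y] [T2Space Y] [LocallyCompactSpace Y]
    (T : C₀(X, ℝ) → C₀(Y, ℝ)) (S : C₀(Y, ℝ) → C₀(X, ℝ))
    (hbij : Set.BijOn T (posCone X) (posCone Y))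
    (hnorm : ∀ f ∈ posCone X, ∀ g ∈ posCone X, ‖T (f + g)‖ = ‖T f + T g‖)
    (hST : ∀ f ∈ posCone X, S (T f) = f)
    (hTS : ∀ v ∈ posCone Y, T (S v) = v)
    (τ : Y → X)
    (hτ : ∀ y : Y,
      (⋂ f ∈ {g : C₀(X, ℝ) | g ∈ posCone X ∧ 0 < T g y}, tsupport (⇑f : X → ℝ))
        = {τ y})
    (σ : X → Y)
    (hσ : ∀ x : X,
      (⋂ v ∈ {w : C₀(Y, ℝ) | w ∈ posCone Y ∧ 0 < S w x}, tsupport (⇑v : Y → ℝ))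
        = {σ x}) :
    ∃ e : Y ≃ₜ X, (∀ y : Y, e y = τ y) ∧ (∀ x : X, e.symm x = σ x) := by
  classical
  -- cone basics
  have addX : ∀ {f g : C₀(X, ℝ)}, f ∈ posCone X → g ∈ posCone X → f + g ∈ posCone X := by
    intro f g hf hg x
    exact add_nonneg (hf x) (hg x)
  have hTmem : ∀ f ∈ posCone X, T f ∈ posCone Y := fun f hf => hbij.mapsTo hf
  have hSmem : ∀ v ∈ posCone Y, S v ∈ posCone X := by
    intro v hv
    obtain ⟨f, hf, hfv⟩ := hbij.surjOn hv
    rw [← hfv, hST f hf]; exact hf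
  have smulY : ∀ (t : ℝ), 0 ≤ t → ∀ w ∈ posCone Y, t • w ∈ posCone Y := by
    intro t ht w hw z
    show 0 ≤ (t • w) z
    have : (t • w) z = t * w z := rfl
    rw [this]; exact mul_nonneg ht (hw z)
  -- Lemma LS': away from the support of the bump, `T (f + S (t • w))` is bounded by `‖T f‖`.
  have ls : ∀ f ∈ posCone X, ∀ w ∈ posCone Y, (∀ z, w z ≤ 1) → ∀ t : ℝ, 0 ≤ t →
      ∀ y', y' ∉ tsupport ⇑w → T (f + S (t • w)) y' ≤ ‖T f‖ := by
    intro f hf w hw hw1 t ht y' hy'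
    obtain ⟨w₂, hw₂0, hw₂1, hw₂y, hw₂supp⟩ := exists_bump_pt
        (isClosed_tsupport (⇑w)).isOpen_compl (by simpa using hy')
    have htw : t • w ∈ posCone Y := smulY t ht w hw
    have htw₂ : t • w₂ ∈ posCone Y := smulY t ht w₂ hw₂0
    set a := S (t • w) with ha
    set b := S (t • w₂) with hb
    have hacone : a ∈ posCone X := hSmem _ htw
    have hbcone : b ∈ posCone X := hSmem _ htw₂
    have e7 : ‖t • w + t • w₂‖ ≤ t := by
      apply c0_norm_le _ ht
      intro z
      have hz1 : (t • w + t • w₂) z = t * w z + t * w₂ z := rfl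
      by_cases hz : z ∈ tsupport ⇑w
      · have hzw₂ : w₂ z = 0 :=
          image_eq_zero_of_notMem_tsupport (fun hmem => (hw₂supp hmem) hz)
        rw [hz1, hzw₂, mul_zero, add_zero, abs_of_nonneg (mul_nonneg ht (hw z))]
        calc t * w z ≤ t * 1 := mul_le_mul_of_nonneg_left (hw1 z) ht
          _ = t := mul_one t
      · have hzw : w z = 0 := image_eq_zero_of_notMem_tsupport hz
        rw [hz1, hzw, mul_zero, zero_add, abs_of_nonneg (mul_nonneg ht (hw₂0 z))]
        calc t * w₂ z ≤ t * 1 := mul_le_mul_of_nonneg_left (hw₂1 z) ht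
          _ = t := mul_one t
    have hchain : ‖T (f + a) + t • w₂‖ ≤ t + ‖T f‖ := by
      have e3 : (f + a) + b = (a + b) + f := by abel
      calc ‖T (f + a) + t • w₂‖
          = ‖T (f + a) + T b‖ := by rw [hb, hTS _ htw₂]
        _ = ‖T ((f + a) + b)‖ := (hnorm _ (addX hf hacone) _ hbcone).symm
        _ = ‖T ((a + b) + f)‖ := by rw [e3]
        _ = ‖T (a + b) + T f‖ := hnorm _ (addX hacone hbcone) _ hf
        _ ≤ ‖T (a + b)‖ + ‖T f‖ := norm_add_le _ _
        _ = ‖T a + T b‖ + ‖T f‖ := by rw [hnorm _ hacone _ hbcone]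
        _ = ‖t • w + t • w₂‖ + ‖T f‖ := by rw [ha, hb, hTS _ htw, hTS _ htw₂]
        _ ≤ t + ‖T f‖ := by linarith
    have heval : T (f + a) y' + t ≤ ‖T (f + a) + t • w₂‖ := by
      have h0 : (T (f + a) + t • w₂) y' = T (f + a) y' + t * w₂ y' := rfl
      have h := c0_eval_le_norm (T (f + a) + t • w₂) y'
      rw [h0, hw₂y, mul_one] at h
      exact h
    linarith
  -- pointwise subadditivity
  have subadd : ∀ f ∈ posCone X, ∀ g ∈ posCone X, ∀ y₁ : Y,
      T (f + g) y₁ ≤ T f y₁ + T g y₁ := by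
    intro f hf g hg y₁
    have hTf := hTmem f hf
    have hTgg := hTmem g hg
    have hTfg := hTmem _ (addX hf hg)
    refine le_of_forall_pos_le_add ?_
    intro δ hδ
    have hε : 0 < δ / 2 := by linarith
    set ε := δ / 2 with hεdef
    set c₁ := T f y₁ with hc₁
    set c₂ := T g y₁ with hc₂
    set c₃ := T (f + g) y₁ with hc₃
    have hc₁0 : 0 ≤ c₁ := hTf y₁
    have hc₂0 : 0 ≤ c₂ := hTgg y₁
    set W : Set Y := {y | T f y < c₁ + ε} ∩ {y | T g y < c₂ + ε} with hWdef
    have hWopen : IsOpen W := by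
      apply IsOpen.inter
      · exact isOpen_lt (map_continuous (T f)) continuous_const
      · exact isOpen_lt (map_continuous (T g)) continuous_const
    have hy₁W : y₁ ∈ W := ⟨by simp [hc₁]; linarith, by simp [hc₂]; linarith⟩
    obtain ⟨w, hw0, hw1, hwy₁, hwsupp⟩ := exists_bump_pt hWopen hy₁W
    have hwcone : w ∈ posCone Y := hw0
    set t := ‖T f‖ + ‖T g‖ with htdef
    have ht : 0 ≤ t := add_nonneg (norm_nonneg _) (norm_nonneg _)
    have htw : t • w ∈ posCone Y := smulY t ht w hwcone
    set h_t := S (t • w) with hhtdef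
    have hhtcone : h_t ∈ posCone X := hSmem _ htw
    have eq1 : ‖T (f + g + h_t)‖ = ‖T (f + g) + t • w‖ := by
      rw [hnorm _ (addX hf hg) _ hhtcone, hhtdef, hTS _ htw]
    have eq2 : ‖T (f + g + h_t)‖ = ‖T (f + h_t) + T g‖ := by
      rw [show f + g + h_t = (f + h_t) + g by abel, hnorm _ (addX hf hhtcone) _ hg]
    have lower : c₃ + t ≤ ‖T (f + g) + t • w‖ := by
      have h0 : (T (f + g) + t • w) y₁ = c₃ + t * w y₁ := rfl
      have h := c0_eval_le_norm (T (f + g) + t • w) y₁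
      rw [h0, hwy₁, mul_one] at h
      exact h
    have hTfht : ‖T (f + h_t)‖ ≤ t + (c₁ + ε) := by
      have h2 : ‖T (f + h_t)‖ = ‖T f + t • w‖ := by
        rw [hnorm f hf h_t hhtcone, hhtdef, hTS _ htw]
      rw [h2]
      apply c0_norm_le _ (by linarith)
      intro z
      have hz1 : (T f + t • w) z = T f z + t * w z := rfl
      rw [hz1, abs_of_nonneg (add_nonneg (hTf z) (mul_nonneg ht (hw0 z)))]
      by_cases hz : z ∈ tsupport ⇑w
      · have hzW : z ∈ W := hwsupp hz
        have h3 : T f z < c₁ + ε := hzW.1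
        have h4 : t * w z ≤ t := by
          calc t * w z ≤ t * 1 := mul_le_mul_of_nonneg_left (hw1 z) ht
            _ = t := mul_one t
        linarith
      · have hzw : w z = 0 := image_eq_zero_of_notMem_tsupport hz
        have h3 : T f z ≤ ‖T f‖ := c0_eval_le_norm _ z
        have h4 : ‖T f‖ ≤ t := by rw [htdef]; linarith [norm_nonneg (T g)]
        rw [hzw, mul_zero, add_zero]
        linarith
    have upper : ‖T (f + h_t) + T g‖ ≤ t + (c₁ + ε) + (c₂ + ε) := by
      apply c0_norm_le _ (by linarith)
      intro z
      have hz1 : (T (f + h_t) + T g) z = T (f + h_t) z + T g z := rfl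
      have hfht0 : 0 ≤ T (f + h_t) z := hTmem _ (addX hf hhtcone) z
      rw [hz1, abs_of_nonneg (add_nonneg hfht0 (hTgg z))]
      by_cases hz : z ∈ tsupport ⇑w
      · have hzW : z ∈ W := hwsupp hz
        have h3 : T (f + h_t) z ≤ t + (c₁ + ε) := (c0_eval_le_norm _ z).trans hTfht
        have h4 : T g z < c₂ + ε := hzW.2
        linarith
      · have h3 : T (f + h_t) z ≤ ‖T f‖ := by
          rw [hhtdef]
          exact ls f hf w hwcone hw1 t ht z hz
        have h4 : T g z ≤ ‖T g‖ := c0_eval_le_norm _ z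
        have h5 : ‖T f‖ + ‖T g‖ = t := htdef.symm
        linarith
    have final : c₃ + t ≤ t + (c₁ + ε) + (c₂ + ε) := by
      calc c₃ + t ≤ ‖T (f + g) + t • w‖ := lower
        _ = ‖T (f + g + h_t)‖ := eq1.symm
        _ = ‖T (f + h_t) + T g‖ := eq2
        _ ≤ t + (c₁ + ε) + (c₂ + ε) := upper
    have : ε + ε = δ := by rw [hεdef]; ring
    linarith
  -- pointwise superadditivity
  have superadd : ∀ f ∈ posCone X, ∀ g ∈ posCone X, ∀ y₁ : Y,
      T f y₁ + T g y₁ ≤ T (f + g) y₁ := by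
    intro f hf g hg y₁
    have hTf := hTmem f hf
    have hTgg := hTmem g hg
    have hTfg := hTmem _ (addX hf hg)
    refine le_of_forall_pos_le_add ?_
    intro δ hδ
    have hε : 0 < δ / 2 := by linarith
    set ε := δ / 2 with hεdef
    set c₁ := T f y₁ with hc₁
    set c₂ := T g y₁ with hc₂
    set c₃ := T (f + g) y₁ with hc₃
    have hc₁0 : 0 ≤ c₁ := hTf y₁
    have hc₂0 : 0 ≤ c₂ := hTgg y₁
    have hc₃0 : 0 ≤ c₃ := hTfg y₁
    set W : Set Y := {y | c₂ - ε < T g y} ∩ {y | T (f + g) y < c₃ + ε} with hWdef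
    have hWopen : IsOpen W := by
      apply IsOpen.inter
      · exact isOpen_lt continuous_const (map_continuous (T g))
      · exact isOpen_lt (map_continuous (T (f + g))) continuous_const
    have hy₁W : y₁ ∈ W := ⟨by simp [hc₂]; linarith, by simp [hc₃]; linarith⟩
    obtain ⟨w, hw0, hw1, hwy₁, hwsupp⟩ := exists_bump_pt hWopen hy₁W
    have hwcone : w ∈ posCone Y := hw0
    set t := ‖T f‖ + ‖T (f + g)‖ + 1 with htdef
    have ht : 0 ≤ t := by
      have := norm_nonneg (T f); have := norm_nonneg (T (f + g)); linarith
    have htw : t • w ∈ posCone Y := smulY t ht w hwcone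
    set h_t := S (t • w) with hhtdef
    have hhtcone : h_t ∈ posCone X := hSmem _ htw
    have eq1 : ‖T (f + g + h_t)‖ = ‖T (f + g) + t • w‖ := by
      rw [hnorm _ (addX hf hg) _ hhtcone, hhtdef, hTS _ htw]
    have eq2 : ‖T (f + g + h_t)‖ = ‖T (f + h_t) + T g‖ := by
      rw [show f + g + h_t = (f + h_t) + g by abel, hnorm _ (addX hf hhtcone) _ hg]
    set u := T (f + h_t) with hudef
    have hucone : u ∈ posCone Y := hTmem _ (addX hf hhtcone)
    have hnu : ‖u‖ = ‖T f + t • w‖ := by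
      rw [hudef, hnorm f hf h_t hhtcone, hhtdef, hTS _ htw]
    have hnupos : c₁ + t ≤ ‖u‖ := by
      rw [hnu]
      have h0 : (T f + t • w) y₁ = c₁ + t * w y₁ := rfl
      have h := c0_eval_le_norm (T f + t • w) y₁
      rw [h0, hwy₁, mul_one] at h
      exact h
    obtain ⟨y₂, hy₂⟩ := c0_exists_norm_eq u hucone (by
      have h1 := norm_nonneg (T f); have h2 := norm_nonneg (T (f + g)); linarith)
    -- subadditivity at y₂ forces y₂ to be in the support of w
    have hsub2 : u y₂ ≤ T f y₂ + t * w y₂ := by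
      have h := subadd f hf h_t hhtcone y₂
      have h2 : T h_t y₂ = t * w y₂ := by rw [hhtdef, hTS _ htw]; rfl
      rw [hudef]
      calc T (f + h_t) y₂ ≤ T f y₂ + T h_t y₂ := h
        _ = T f y₂ + t * w y₂ := by rw [h2]
    have hwy₂ : w y₂ ≠ 0 := by
      intro h0
      rw [h0, mul_zero, add_zero] at hsub2
      have h3 : T f y₂ ≤ ‖T f‖ := c0_eval_le_norm _ y₂
      have h4 : c₁ + t ≤ u y₂ := by rw [hy₂]; exact hnupos
      have : ‖T f‖ + 1 ≤ t := by
        rw [htdef]; linarith [norm_nonneg (T (f + g))]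
      linarith
    have hy₂W : y₂ ∈ W := hwsupp (subset_tsupport _ hwy₂)
    have lower : (c₁ + t) + (c₂ - ε) ≤ ‖u + T g‖ := by
      have h0 : (u + T g) y₂ = u y₂ + T g y₂ := rfl
      have h := c0_eval_le_norm (u + T g) y₂
      rw [h0, hy₂] at h
      have h4 : c₂ - ε < T g y₂ := hy₂W.1
      linarith
    have upper : ‖T (f + g) + t • w‖ ≤ t + (c₃ + ε) := by
      apply c0_norm_le _ (by linarith)
      intro z
      have hz1 : (T (f + g) + t • w) z = T (f + g) z + t * w z := rfl
      rw [hz1, abs_of_nonneg (add_nonneg (hTfg z) (mul_nonneg ht (hw0 z)))]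
      by_cases hz : z ∈ tsupport ⇑w
      · have h3 : T (f + g) z < c₃ + ε := (hwsupp hz).2
        have h4 : t * w z ≤ t := by
          calc t * w z ≤ t * 1 := mul_le_mul_of_nonneg_left (hw1 z) ht
            _ = t := mul_one t
        linarith
      · have hzw : w z = 0 := image_eq_zero_of_notMem_tsupport hz
        have h3 : T (f + g) z ≤ ‖T (f + g)‖ := c0_eval_le_norm _ z
        have h4 : ‖T (f + g)‖ ≤ t := by rw [htdef]; linarith [norm_nonneg (T f)]
        rw [hzw, mul_zero, add_zero]
        linarith
    have final : (c₁ + t) + (c₂ - ε) ≤ t + (c₃ + ε) := by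
      calc (c₁ + t) + (c₂ - ε) ≤ ‖u + T g‖ := lower
        _ = ‖T (f + g + h_t)‖ := by rw [hudef, ← eq2]
        _ = ‖T (f + g) + t • w‖ := eq1
        _ ≤ t + (c₃ + ε) := upper
    have : ε + ε = δ := by rw [hεdef]; ring
    linarith
  -- additivity of T
  have addT : ∀ f ∈ posCone X, ∀ g ∈ posCone X, T (f + g) = T f + T g := by
    intro f hf g hg
    ext y
    have h1 := subadd f hf g hg y
    have h2 := superadd f hf g hg y
    have h3 : (T f + T g) y = T f y + T g y := rfl
    rw [h3]
    linarith
  -- additivity of S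
  have addS : ∀ u ∈ posCone Y, ∀ v ∈ posCone Y, S (u + v) = S u + S v := by
    intro u hu v hv
    have h1 : T (S u + S v) = u + v := by
      rw [addT _ (hSmem u hu) _ (hSmem v hv), hTS u hu, hTS v hv]
    calc S (u + v) = S (T (S u + S v)) := by rw [h1]
      _ = S u + S v := hST _ (addX (hSmem u hu) (hSmem v hv))
  -- support facts from hτ and hσ
  have fact1 : ∀ g ∈ posCone X, ∀ y : Y, 0 < T g y → τ y ∈ tsupport ⇑g := by
    intro g hg y hy
    have hmem : τ y ∈ ({τ y} : Set X) := rfl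
    rw [← hτ y] at hmem
    exact Set.mem_iInter₂.mp hmem g ⟨hg, hy⟩
  have fact3 : ∀ v ∈ posCone Y, ∀ x : X, 0 < S v x → σ x ∈ tsupport ⇑v := by
    intro v hv x hx
    have hmem : σ x ∈ ({σ x} : Set Y) := rfl
    rw [← hσ x] at hmem
    exact Set.mem_iInter₂.mp hmem v ⟨hv, hx⟩
  have negσ : ∀ x : X, ∀ y' : Y, y' ≠ σ x →
      ∃ v, v ∈ posCone Y ∧ 0 < S v x ∧ y' ∉ tsupport ⇑v := by
    intro x y' hne
    by_contra hcon
    push_neg at hcon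
    apply hne
    have hmem : y' ∈ ⋂ v ∈ {w : C₀(Y, ℝ) | w ∈ posCone Y ∧ 0 < S w x}, tsupport ⇑v :=
      Set.mem_iInter₂.mpr fun v hv => hcon v hv.1 hv.2
    rw [hσ x] at hmem
    exact hmem
  have negτ : ∀ y : Y, ∀ x' : X, x' ≠ τ y →
      ∃ g, g ∈ posCone X ∧ 0 < T g y ∧ x' ∉ tsupport ⇑g := by
    intro y x' hne
    by_contra hcon
    push_neg at hcon
    apply hne
    have hmem : x' ∈ ⋂ g ∈ {g : C₀(X, ℝ) | g ∈ posCone X ∧ 0 < T g y}, tsupport ⇑g :=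
      Set.mem_iInter₂.mpr fun g hg => hcon g hg.1 hg.2
    rw [hτ y] at hmem
    exact hmem
  -- σ ∘ τ = id
  have sigma_tau : ∀ y : Y, σ (τ y) = y := by
    intro y
    by_contra hne
    obtain ⟨v, hvcone, hSvpos, hyv⟩ := negσ (τ y) y (fun h => hne h.symm)
    obtain ⟨w, hw0, hw1, hwy, hwsupp⟩ :=
      exists_bump_pt (isClosed_tsupport (⇑v)).isOpen_compl (by simpa using hyv)
    have hwcone : w ∈ posCone Y := hw0
    have hTSw : T (S w) y = 1 := by rw [hTS w hwcone]; exact hwy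
    have h1 : τ y ∈ tsupport ⇑(S w) :=
      fact1 (S w) (hSmem w hwcone) y (by rw [hTSw]; norm_num)
    have hsub : Function.support ⇑(S w) ⊆ {x' | S v x' = 0} := by
      intro x' hx'
      have hpos : 0 < S w x' := lt_of_le_of_ne (hSmem w hwcone x') (Ne.symm hx')
      by_contra hv0
      have hposv : 0 < S v x' := lt_of_le_of_ne (hSmem v hvcone x') (Ne.symm hv0)
      exact (hwsupp (fact3 w hwcone x' hpos)) (fact3 v hvcone x' hposv)
    have hclosed : IsClosed {x' | S v x' = 0} :=
      isClosed_eq (map_continuous (S v)) continuous_const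
    have h2 : tsupport ⇑(S w) ⊆ {x' | S v x' = 0} := closure_minimal hsub hclosed
    have h3 : S v (τ y) = 0 := h2 h1
    rw [h3] at hSvpos
    exact lt_irrefl 0 hSvpos
  -- τ ∘ σ = id
  have tau_sigma : ∀ x : X, τ (σ x) = x := by
    intro x
    by_contra hne
    obtain ⟨f, hfcone, hTfpos, hxf⟩ := negτ (σ x) x (fun h => hne h.symm)
    obtain ⟨φ, hφ0, hφ1, hφx, hφsupp⟩ :=
      exists_bump_pt (isClosed_tsupport (⇑f)).isOpen_compl (by simpa using hxf)
    have hφcone : φ ∈ posCone X := hφ0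
    have hSTφ : S (T φ) x = 1 := by rw [hST φ hφcone]; exact hφx
    have h1 : σ x ∈ tsupport ⇑(T φ) :=
      fact3 (T φ) (hTmem φ hφcone) x (by rw [hSTφ]; norm_num)
    have hsub : Function.support ⇑(T φ) ⊆ {y' | T f y' = 0} := by
      intro y' hy'
      have hpos : 0 < T φ y' := lt_of_le_of_ne (hTmem φ hφcone y') (Ne.symm hy')
      by_contra hf0
      have hposf : 0 < T f y' := lt_of_le_of_ne (hTmem f hfcone y') (Ne.symm hf0)
      exact (hφsupp (fact1 φ hφcone y' hpos)) (fact1 f hfcone y' hposf)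
    have hclosed : IsClosed {y' | T f y' = 0} :=
      isClosed_eq (map_continuous (T f)) continuous_const
    have h2 : tsupport ⇑(T φ) ⊆ {y' | T f y' = 0} := closure_minimal hsub hclosed
    have h3 : T f (σ x) = 0 := h2 h1
    rw [h3] at hTfpos
    exact lt_irrefl 0 hTfpos
  -- continuity of τ
  have cont_τ : Continuous τ := by
    rw [continuous_iff_continuousAt]
    intro y₀
    rw [ContinuousAt, Filter.tendsto_def]
    intro U hU
    obtain ⟨U', hU'sub, hU'open, hx₀⟩ := mem_nhds_iff.mp hU
    obtain ⟨K, hKc, hxint, hKU'⟩ := exists_compact_subset hU'open hx₀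
    obtain ⟨χ, hχ0, hχ1, hχK, hχsupp⟩ := exists_bump hKc hU'open hKU'
    have hχcone : χ ∈ posCone X := hχ0
    obtain ⟨w, hw0, hw1, hwy₀, hwsupp⟩ := exists_bump_pt isOpen_univ (Set.mem_univ y₀)
    have hwcone : w ∈ posCone Y := hw0
    set g := S w with hgdef
    have hgcone : g ∈ posCone X := hSmem w hwcone
    have hTgw : T g = w := hTS w hwcone
    set A := g * χ with hAdef
    set B := g - A with hBdef
    have hAx : ∀ x, A x = g x * χ x := fun x => rfl
    have hBx : ∀ x, B x = g x - g x * χ x := fun x => rfl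
    have hAcone : A ∈ posCone X := fun x => by
      rw [hAx]; exact mul_nonneg (hgcone x) (hχ0 x)
    have hBcone : B ∈ posCone X := fun x => by
      rw [hBx]
      have : g x - g x * χ x = g x * (1 - χ x) := by ring
      rw [this]
      exact mul_nonneg (hgcone x) (by linarith [hχ1 x])
    have hAB : A + B = g := by rw [hBdef]; abel
    have hsum : T A y₀ + T B y₀ = 1 := by
      have h1 : T (A + B) = T A + T B := addT A hAcone B hBcone
      have h2 : T (A + B) y₀ = T A y₀ + T B y₀ := by rw [h1]; rfl
      rw [← h2, hAB, hTgw]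
      exact hwy₀
    have hTB0 : T B y₀ = 0 := by
      by_contra h0
      have hpos : 0 < T B y₀ := lt_of_le_of_ne (hTmem B hBcone y₀) (Ne.symm h0)
      have hx₀supp : τ y₀ ∈ tsupport ⇑B := fact1 B hBcone y₀ hpos
      have hcoz : Function.support ⇑B ⊆ Kᶜ := by
        intro x hx
        simp only [Set.mem_compl_iff]
        intro hxK
        apply hx
        have : B x = g x - g x * χ x := rfl
        rw [this, hχK x hxK]
        ring
      have h2 : tsupport ⇑B ⊆ (interior K)ᶜ := by
        calc tsupport ⇑B ⊆ closure Kᶜ := closure_mono hcoz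
          _ = (interior K)ᶜ := by rw [closure_compl]
      exact (h2 hx₀supp) hxint
    have hTA1 : 0 < T A y₀ := by rw [hTB0, add_zero] at hsum; rw [hsum]; norm_num
    have hVopen : IsOpen {y : Y | 0 < T A y} :=
      isOpen_lt continuous_const (map_continuous (T A))
    have hsubV : {y : Y | 0 < T A y} ⊆ τ ⁻¹' U := by
      intro y hy
      have h1 : τ y ∈ tsupport ⇑A := fact1 A hAcone y hy
      have h2 : tsupport ⇑A ⊆ tsupport ⇑χ := by
        apply closure_minimal _ (isClosed_tsupport _)
        intro x hx
        have : A x = g x * χ x := rfl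
        apply subset_tsupport
        intro h0
        apply hx
        rw [this, h0, mul_zero]
      exact hU'sub (hχsupp (h2 h1))
    exact Filter.mem_of_superset (hVopen.mem_nhds hTA1) hsubV
  -- continuity of σ
  have cont_σ : Continuous σ := by
    rw [continuous_iff_continuousAt]
    intro x₀
    rw [ContinuousAt, Filter.tendsto_def]
    intro V hV
    obtain ⟨V', hV'sub, hV'open, hy₀⟩ := mem_nhds_iff.mp hV
    obtain ⟨K, hKc, hyint, hKV'⟩ := exists_compact_subset hV'open hy₀
    obtain ⟨χ, hχ0, hχ1, hχK, hχsupp⟩ := exists_bump hKc hV'open hKV'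
    have hχcone : χ ∈ posCone Y := hχ0
    obtain ⟨φ, hφ0, hφ1, hφx₀, hφsupp⟩ := exists_bump_pt isOpen_univ (Set.mem_univ x₀)
    have hφcone : φ ∈ posCone X := hφ0
    set G := T φ with hGdef
    have hGcone : G ∈ posCone Y := hTmem φ hφcone
    have hSGφ : S G = φ := hST φ hφcone
    set A := G * χ with hAdef
    set B := G - A with hBdef
    have hAcone : A ∈ posCone Y := fun y => by
      have : A y = G y * χ y := rfl
      rw [this]; exact mul_nonneg (hGcone y) (hχ0 y)
    have hBcone : B ∈ posCone Y := fun y => by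
      have : B y = G y - G y * χ y := rfl
      rw [this]
      have h2 : G y - G y * χ y = G y * (1 - χ y) := by ring
      rw [h2]
      exact mul_nonneg (hGcone y) (by linarith [hχ1 y])
    have hAB : A + B = G := by rw [hBdef]; abel
    have hsum : S A x₀ + S B x₀ = 1 := by
      have h1 : S (A + B) = S A + S B := addS A hAcone B hBcone
      have h2 : S (A + B) x₀ = S A x₀ + S B x₀ := by rw [h1]; rfl
      rw [← h2, hAB, hSGφ]
      exact hφx₀
    have hSB0 : S B x₀ = 0 := by
      by_contra h0
      have hpos : 0 < S B x₀ := lt_of_le_of_ne (hSmem B hBcone x₀) (Ne.symm h0)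
      have hy₀supp : σ x₀ ∈ tsupport ⇑B := fact3 B hBcone x₀ hpos
      have hcoz : Function.support ⇑B ⊆ Kᶜ := by
        intro y hy
        simp only [Set.mem_compl_iff]
        intro hyK
        apply hy
        have : B y = G y - G y * χ y := rfl
        rw [this, hχK y hyK]
        ring
      have h2 : tsupport ⇑B ⊆ (interior K)ᶜ := by
        calc tsupport ⇑B ⊆ closure Kᶜ := closure_mono hcoz
          _ = (interior K)ᶜ := by rw [closure_compl]
      exact (h2 hy₀supp) hyint
    have hSA1 : 0 < S A x₀ := by rw [hSB0, add_zero] at hsum; rw [hsum]; norm_num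
    have hUopen : IsOpen {x : X | 0 < S A x} :=
      isOpen_lt continuous_const (map_continuous (S A))
    have hsubU : {x : X | 0 < S A x} ⊆ σ ⁻¹' V := by
      intro x hx
      have h1 : σ x ∈ tsupport ⇑A := fact3 A hAcone x hx
      have h2 : tsupport ⇑A ⊆ tsupport ⇑χ := by
        apply closure_minimal _ (isClosed_tsupport _)
        intro y hy
        have : A y = G y * χ y := rfl
        apply subset_tsupport
        intro h0
        apply hy
        rw [this, h0, mul_zero]
      exact hV'sub (hχsupp (h2 h1))
    exact Filter.mem_of_superset (hUopen.mem_nhds hSA1) hsubU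
  -- assemble the homeomorphism
  exact ⟨⟨⟨τ, σ, sigma_tau, tau_sigma⟩, cont_τ, cont_σ⟩, fun y => rfl, fun x => rfl⟩
end

section
/- Let X and Y be locally compact Hausdorff spaces and let T : C₀(X)⁺ → C₀(Y)⁺ be a bijection satisfying ‖T(f+g)‖ = ‖Tf + Tg‖ for all f, g ∈ C₀(X)⁺. Let y ∈ Y and let x₀ ∈ X be the unique point with ⋂_{f ∈ F_y} supp(f) = {x₀}, where F_y = {f ∈ C₀(X)⁺ : Tf(y) > 0}. If f, g ∈ C₀(X)⁺ satisfy f(x) ≤ g(x) for all x in some open neighborhood of x₀, then Tf(y) ≤ Tg(y). -/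
open scoped ZeroAtInfty
open Set Filter

lemma my_apply_le_norm {Y : Type*} [TopologicalSpace Y] (a : C₀(Y, ℝ)) (z : Y) : a z ≤ ‖a‖ := by
  have h := a.toBCF.norm_coe_le_norm z
  rw [ZeroAtInftyContinuousMap.norm_toBCF_eq_norm] at h
  have : a.toBCF z = a z := rfl
  rw [this, Real.norm_eq_abs] at h
  exact (abs_le.mp h).2

lemma my_norm_le_of {Y : Type*} [TopologicalSpace Y] (a : C₀(Y, ℝ)) {C : ℝ} (hC : 0 ≤ C)
    (h : ∀ z, |a z| ≤ C) : ‖a‖ ≤ C := by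
  rw [← ZeroAtInftyContinuousMap.norm_toBCF_eq_norm]
  exact (BoundedContinuousFunction.norm_le hC).2 (fun z => by
    simpa [Real.norm_eq_abs] using h z)

lemma my_norm_le_add {Y : Type*} [TopologicalSpace Y] (a b : C₀(Y, ℝ))
    (ha : ∀ z, 0 ≤ a z) (hb : ∀ z, 0 ≤ b z) : ‖a‖ ≤ ‖a + b‖ := by
  apply my_norm_le_of a (norm_nonneg _)
  intro z
  rw [abs_of_nonneg (ha z)]
  calc a z ≤ a z + b z := by linarith [hb z]
  _ = (a + b) z := by simp
  _ ≤ ‖a + b‖ := my_apply_le_norm _ _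

lemma my_exists_peak {Z : Type*} [TopologicalSpace Z] [T2Space Z] [LocallyCompactSpace Z]
    (z : Z) (W : Set Z) (hW : IsOpen W) (hz : z ∈ W) (M : ℝ) (hM : 0 ≤ M) :
    ∃ h : C₀(Z, ℝ), (∀ p, 0 ≤ h p) ∧ (∀ p, h p ≤ M) ∧ h z = M ∧ tsupport (⇑h) ⊆ W := by
  obtain ⟨K, hKc, hzK, hKW⟩ := exists_compact_subset hW hz
  have hdisj : Disjoint ({z} : Set Z) (interior K)ᶜ := by
    simp [Set.disjoint_singleton_left, hzK]
  obtain ⟨f, hf1, hf0, hfc, hf01⟩ := exists_continuous_one_zero_of_isCompact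
    isCompact_singleton isOpen_interior.isClosed_compl hdisj
  have hsupp : tsupport (⇑f) ⊆ K := by
    apply closure_minimal ?_ hKc.isClosed
    intro p hp
    by_contra hpK
    exact hp (hf0 (fun hc => hpK (interior_subset hc)))
  refine ⟨⟨⟨fun p => M * f p, continuous_const.mul f.continuous⟩, ?_⟩, ?_, ?_, ?_, ?_⟩
  · show Tendsto (fun p => M * f p) (cocompact Z) (nhds 0)
    refine Filter.Tendsto.congr' ?_
      (tendsto_const_nhds : Tendsto (fun _ : Z => (0:ℝ)) (cocompact Z) (nhds 0))
    filter_upwards [hKc.compl_mem_cocompact] with p hp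
    have : f p = 0 := hf0 (fun hc => hp (interior_subset hc))
    simp [this]
  · intro p; exact mul_nonneg hM (hf01 p).1
  · intro p; calc M * f p ≤ M * 1 := mul_le_mul_of_nonneg_left (hf01 p).2 hM
      _ = M := mul_one M
  · have : f z = 1 := hf1 rfl
    simp [this]
  · refine subset_trans (closure_minimal ?_ hKc.isClosed) hKW
    intro p hp
    simp only [Function.mem_support] at hp
    by_contra hpK
    exact hp (by have : f p = 0 := hf0 (fun hc => hpK (interior_subset hc)); simp [this])

/-- **Lemma 3.1.** Let `T` be a norm additive bijection between positive cones, let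
`y ∈ Y` and let `x₀` be the unique point with `⋂_{f ∈ F_y} supp(f) = {x₀}`. If
`f ≤ g` on an open neighborhood of `x₀`, then `Tf(y) ≤ Tg(y)`. -/
theorem stmt13 {X Y : Type*} [TopologicalSpace X] [T2Space X] [LocallyCompactSpace X]
    [TopologicalSpace Y] [T2Space Y] [LocallyCompactSpace Y]
    (T : C₀(X, ℝ) → C₀(Y, ℝ))
    (hbij : Set.BijOn T (posCone X) (posCone Y))
    (hnorm : ∀ f ∈ posCone X, ∀ g ∈ posCone X, ‖T (f + g)‖ = ‖T f + T g‖)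
    (y : Y) (x₀ : X)
    (hx₀ : (⋂ f ∈ {g : C₀(X, ℝ) | g ∈ posCone X ∧ 0 < T g y},
      tsupport (⇑f : X → ℝ)) = {x₀}) :
    ∀ f ∈ posCone X, ∀ g ∈ posCone X, ∀ U : Set X, IsOpen U → x₀ ∈ U →
      (∀ x ∈ U, f x ≤ g x) → T f y ≤ T g y := by
  intro f hf g hg U hU hxU hfg
  have hf' : ∀ x, 0 ≤ f x := hf
  have hg' : ∀ x, 0 ≤ g x := hg
  -- Urysohn function φ on X : 1 on K (compact nbhd of x₀), 0 off U
  obtain ⟨K, hKc, hx0K, hKU⟩ := exists_compact_subset hU hxU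
  have hdisj : Disjoint K Uᶜ := Set.disjoint_left.mpr fun x hxK hxUc => hxUc (hKU hxK)
  obtain ⟨φ, hφ1, hφ0, hφcs, hφ01⟩ :=
    exists_continuous_one_zero_of_isCompact hKc hU.isClosed_compl hdisj
  -- w = f * (1 - φ) as an element of C₀
  have hwtend : Tendsto (fun x => f x * (1 - φ x)) (cocompact X) (nhds 0) := by
    have habs : Tendsto (fun x => |f x|) (cocompact X) (nhds 0) := by
      simpa using (f.zero_at_infty').abs
    apply squeeze_zero_norm ?_ habs
    intro x
    rw [Real.norm_eq_abs, abs_mul]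
    have h1 : |1 - φ x| ≤ 1 := by
      have := (hφ01 x).1; have := (hφ01 x).2
      rw [abs_le]; constructor <;> linarith
    calc |f x| * |1 - φ x| ≤ |f x| * 1 := mul_le_mul_of_nonneg_left h1 (abs_nonneg _)
    _ = |f x| := mul_one _
  set w : C₀(X, ℝ) :=
    ⟨⟨fun x => f x * (1 - φ x), f.continuous.mul (continuous_const.sub φ.continuous)⟩,
      hwtend⟩ with hwdef
  have hwapp : ∀ x, w x = f x * (1 - φ x) := fun x => rfl
  have hwmem : w ∈ posCone X := by
    intro x
    rw [hwapp]
    exact mul_nonneg (hf' x) (by linarith [(hφ01 x).2])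
  have hw' : ∀ x, 0 ≤ w x := hwmem
  -- f ≤ g + w pointwise
  have hfgw : ∀ x, f x ≤ g x + w x := by
    intro x
    have hkey : f x * φ x ≤ g x := by
      by_cases hx : x ∈ U
      · calc f x * φ x ≤ f x * 1 := mul_le_mul_of_nonneg_left (hφ01 x).2 (hf' x)
        _ = f x := mul_one _
        _ ≤ g x := hfg x hx
      · have : φ x = 0 := hφ0 hx
        rw [this, mul_zero]; exact hg' x
    have : w x = f x - f x * φ x := by rw [hwapp]; ring
    linarith
  -- d = g + w - f is in the cone
  have hdmem : g + w - f ∈ posCone X := by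
    intro x
    have : (g + w - f) x = g x + w x - f x := by
      simp [ZeroAtInftyContinuousMap.sub_apply, ZeroAtInftyContinuousMap.add_apply]
    rw [this]
    linarith [hfgw x]
  -- T w y = 0
  have hTwmem : T w ∈ posCone Y := hbij.mapsTo hwmem
  have hwsupp : x₀ ∉ tsupport (⇑w) := by
    have hsub : tsupport (⇑w) ⊆ (interior K)ᶜ := by
      apply closure_minimal ?_ isOpen_interior.isClosed_compl
      intro p hp hpK
      simp only [Function.mem_support] at hp
      have : φ p = 1 := hφ1 (interior_subset hpK)
      exact hp (by rw [hwapp, this]; ring)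
    exact fun hc => (hsub hc) hx0K
  have hTw0 : T w y = 0 := by
    rcases eq_or_lt_of_le (hTwmem y) with h | h
    · exact h.symm
    · exfalso
      have hx0mem : x₀ ∈ ⋂ f ∈ {g : C₀(X, ℝ) | g ∈ posCone X ∧ 0 < T g y},
          tsupport (⇑f : X → ℝ) := by
        rw [hx₀]; exact rfl
      exact hwsupp (Set.mem_iInter₂.mp hx0mem w ⟨hwmem, h⟩)
  -- main ε-estimate
  have key : ∀ ε : ℝ, 0 < ε → T f y ≤ T g y + (ε + ε) := by
    intro ε hε
    have hTg : ∀ z, 0 ≤ T g z := hbij.mapsTo hg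
    have hTf : ∀ z, 0 ≤ T f z := hbij.mapsTo hf
    set M : ℝ := ‖T g‖ + ‖T w‖ + 1 with hM
    have hM0 : 0 ≤ M := by positivity
    have hMg : ‖T g‖ ≤ M := by
      have := norm_nonneg (T w); simp only [hM]; linarith
    set W : Set Y := {z | T w z < ε} ∩ {z | T g z < T g y + ε} with hWdef
    have hWopen : IsOpen W := by
      apply IsOpen.inter
      · exact isOpen_lt (map_continuous (T w)) continuous_const
      · exact isOpen_lt (map_continuous (T g)) continuous_const
    have hyW : y ∈ W := ⟨by simp only [Set.mem_setOf_eq, hTw0]; exact hε,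
      by simp only [Set.mem_setOf_eq]; linarith⟩
    obtain ⟨h, hh0, hhM, hhy, hhsupp⟩ := my_exists_peak y W hWopen hyW M hM0
    have hhmem : h ∈ posCone Y := hh0
    obtain ⟨k, hkmem, hTk⟩ := hbij.surjOn hhmem
    have hk' : ∀ x, 0 ≤ k x := hkmem
    have hfk : f + k ∈ posCone X := fun x => by
      have : (f + k) x = f x + k x := by simp
      rw [this]; exact add_nonneg (hf' x) (hk' x)
    have hgk : g + k ∈ posCone X := fun x => by
      have : (g + k) x = g x + k x := by simp
      rw [this]; exact add_nonneg (hg' x) (hk' x)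
    -- step 1 : T f y + M ≤ ‖T f + h‖
    have step1 : T f y + M ≤ ‖T f + h‖ := by
      have h1 : (T f + h) y = T f y + h y := by simp
      have := my_apply_le_norm (T f + h) y
      rw [h1, hhy] at this
      exact this
    -- step 2
    have step2 : ‖T f + h‖ = ‖T (f + k)‖ := by
      rw [← hTk]; exact (hnorm f hf k hkmem).symm
    -- step 3 : monotonicity
    have step3 : ‖T (f + k)‖ ≤ ‖T (g + w + k)‖ := by
      have e2 : (f + k) + (g + w - f) = g + w + k := by abel
      have e1 : ‖T ((f + k) + (g + w - f))‖ = ‖T (f + k) + T (g + w - f)‖ :=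
        hnorm _ hfk _ hdmem
      have e3 : ‖T (f + k)‖ ≤ ‖T (f + k) + T (g + w - f)‖ :=
        my_norm_le_add _ _ (hbij.mapsTo hfk) (hbij.mapsTo hdmem)
      rw [← e1, e2] at e3
      exact e3
    -- step 4
    have step4 : ‖T (g + w + k)‖ = ‖T w + T (g + k)‖ := by
      have e2 : w + (g + k) = g + w + k := by abel
      rw [← e2]; exact hnorm w hwmem (g + k) hgk
    -- bound on ‖T (g + k)‖
    have hTgk_norm : ‖T (g + k)‖ ≤ M + (T g y + ε) := by
      have e : ‖T (g + k)‖ = ‖T g + h‖ := by rw [hnorm g hg k hkmem, hTk]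
      rw [e]
      apply my_norm_le_of _ (by linarith [hTg y])
      intro z
      have hz : (T g + h) z = T g z + h z := by simp
      rw [hz, abs_of_nonneg (add_nonneg (hTg z) (hh0 z))]
      by_cases hzW : z ∈ W
      · have := hzW.2
        simp only [Set.mem_setOf_eq] at this
        linarith [hhM z]
      · have hz0 : h z = 0 :=
          image_eq_zero_of_notMem_tsupport (fun hc => hzW (hhsupp hc))
        rw [hz0]
        have := my_apply_le_norm (T g) z
        linarith [hMg, hε, hTg y]
    -- off W : T (g + k) z ≤ ‖T g‖
    have offW : ∀ z, z ∉ W → T (g + k) z ≤ ‖T g‖ := by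
      intro z hzW
      have hznsupp : z ∉ tsupport (⇑h) := fun hc => hzW (hhsupp hc)
      obtain ⟨e, he0, heM, hez, hesupp⟩ := my_exists_peak z (tsupport (⇑h))ᶜ
        isClosed_closure.isOpen_compl hznsupp M hM0
      obtain ⟨q, hqmem, hTq⟩ := hbij.surjOn (he0 : e ∈ posCone Y)
      have hq' : ∀ x, 0 ≤ q x := hqmem
      have hkq : k + q ∈ posCone X := fun x => by
        have : (k + q) x = k x + q x := by simp
        rw [this]; exact add_nonneg (hk' x) (hq' x)
      have l1 : T (g + k) z + M ≤ ‖T (g + k) + e‖ := by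
        have hz : (T (g + k) + e) z = T (g + k) z + e z := by simp
        have := my_apply_le_norm (T (g + k) + e) z
        rw [hz, hez] at this
        exact this
      have l2 : ‖T (g + k) + e‖ = ‖T (g + k + q)‖ := by
        rw [← hTq]; exact (hnorm (g + k) hgk q hqmem).symm
      have l3 : ‖T (g + k + q)‖ = ‖T g + T (k + q)‖ := by
        have e2 : g + (k + q) = g + k + q := by abel
        rw [← e2]; exact hnorm g hg (k + q) hkq
      have l4 : ‖T (k + q)‖ = ‖h + e‖ := by
        rw [hnorm k hkmem q hqmem, hTk, hTq]
      have l5 : ‖h + e‖ ≤ M := by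
        apply my_norm_le_of _ hM0
        intro p
        have hp' : (h + e) p = h p + e p := by simp
        rw [hp', abs_of_nonneg (add_nonneg (hh0 p) (he0 p))]
        by_cases hp : p ∈ tsupport (⇑h)
        · have : e p = 0 :=
            image_eq_zero_of_notMem_tsupport (fun hc => (hesupp hc) hp)
          rw [this]; linarith [hhM p]
        · have : h p = 0 := image_eq_zero_of_notMem_tsupport hp
          rw [this]; linarith [heM p]
      have l6 : ‖T g + T (k + q)‖ ≤ ‖T g‖ + M := by
        calc ‖T g + T (k + q)‖ ≤ ‖T g‖ + ‖T (k + q)‖ := norm_add_le _ _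
        _ ≤ ‖T g‖ + M := by rw [l4]; linarith
      have := l1.trans (le_of_eq l2)
      rw [l3] at this
      linarith [this.trans l6]
    -- step 5
    have step5 : ‖T w + T (g + k)‖ ≤ M + T g y + (ε + ε) := by
      apply my_norm_le_of _ (by linarith [hTg y])
      intro z
      have hz : (T w + T (g + k)) z = T w z + T (g + k) z := by simp
      have hTgk0 : ∀ p, 0 ≤ T (g + k) p := hbij.mapsTo hgk
      rw [hz, abs_of_nonneg (add_nonneg (hTwmem z) (hTgk0 z))]
      by_cases hzW : z ∈ W
      · have h1 : T w z < ε := hzW.1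
        have h2 := (my_apply_le_norm (T (g + k)) z).trans hTgk_norm
        linarith
      · have h1 := my_apply_le_norm (T w) z
        have h2 := offW z hzW
        have h3 : 0 ≤ T g y := hTg y
        have h4 : ‖T g‖ + ‖T w‖ ≤ M := by simp only [hM]; linarith
        linarith
    -- combine
    have final : T f y + M ≤ M + T g y + (ε + ε) := by
      calc T f y + M ≤ ‖T f + h‖ := step1
      _ = ‖T (f + k)‖ := step2
      _ ≤ ‖T (g + w + k)‖ := step3
      _ = ‖T w + T (g + k)‖ := step4
      _ ≤ M + T g y + (ε + ε) := step5
    linarith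
  -- conclude
  by_contra hlt
  push_neg at hlt
  have hd : 0 < (T f y - T g y) / 4 := by linarith
  have := key _ hd
  linarith
end

section
/- Let X and Y be locally compact Hausdorff spaces and let T : C₀(X)⁺ → C₀(Y)⁺ be a bijection satisfying ‖T(f+g)‖ = ‖Tf + Tg‖ for all f, g ∈ C₀(X)⁺. Suppose τ : Y → X and σ : X → Y satisfy: for all f ∈ C₀(X)⁺ and y ∈ Y, τ(y) ∉ supp(f) implies Tf(y) = 0; for all v ∈ C₀(Y)⁺ and x ∈ X, σ(x) ∉ supp(v) implies T⁻¹v(x) = 0; and τ is continuous. Then τ ∘ σ = id_X. -/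
open scoped ZeroAtInfty

/-- **Step in Lemma 2.13.** Let `T` be a norm additive bijection between positive cones
with inverse `S = T⁻¹`. Suppose `τ : Y → X` and `σ : X → Y` satisfy the locality
relations: `τ(y) ∉ supp(f)` implies `Tf(y) = 0`, and `σ(x) ∉ supp(v)` implies
`T⁻¹v(x) = 0`; and suppose `τ` is continuous. Then `τ ∘ σ = id_X`. -/
theorem stmt19 {X Y : Type*} [TopologicalSpace X] [T2Space X] [LocallyCompactSpace X]
    [TopologicalSpace Y] [T2Space Y] [LocallyCompactSpace Y]
    (T : C₀(X, ℝ) → C₀(Y, ℝ)) (S : C₀(Y, ℝ) → C₀(X, ℝ))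
    (hbij : Set.BijOn T (posCone X) (posCone Y))
    (hnorm : ∀ f ∈ posCone X, ∀ g ∈ posCone X, ‖T (f + g)‖ = ‖T f + T g‖)
    (hST : ∀ f ∈ posCone X, S (T f) = f)
    (hTS : ∀ v ∈ posCone Y, T (S v) = v)
    (τ : Y → X) (σ : X → Y)
    (hτloc : ∀ f ∈ posCone X, ∀ y : Y, τ y ∉ tsupport (⇑f : X → ℝ) → T f y = 0)
    (hσloc : ∀ v ∈ posCone Y, ∀ x : X, σ x ∉ tsupport (⇑v : Y → ℝ) → S v x = 0)
    (hτcont : Continuous τ) :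
    ∀ x : X, τ (σ x) = x := by
  intro x
  by_contra hne
  -- separate τ (σ x) and x by disjoint open sets
  obtain ⟨V, U, hV, hU, hxV : τ (σ x) ∈ V, hxU : x ∈ U, hdUV⟩ :=
    t2_separation hne
  -- a bump function at x supported in U
  obtain ⟨f, hf1, hf0, hfc, hf01⟩ :=
    exists_continuous_one_zero_of_isCompact (isCompact_singleton (x := x))
      (hU.isClosed_compl) (by simpa using hxU)
  set f₀ : C₀(X, ℝ) := ⟨f, hfc.is_zero_at_infty⟩ with hf₀
  have hf₀pos : f₀ ∈ posCone X := fun z => (hf01 z).1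
  have hsupp : tsupport (⇑f₀ : X → ℝ) ⊆ closure U := by
    apply closure_mono
    intro z hz
    by_contra hzU
    exact hz (hf0 hzU)
  have hTf₀pos : T f₀ ∈ posCone Y := hbij.mapsTo hf₀pos
  -- tsupport (T f₀) ⊆ τ ⁻¹' (tsupport f₀)
  have hTsupp : tsupport (⇑(T f₀) : Y → ℝ) ⊆ τ ⁻¹' (tsupport (⇑f₀ : X → ℝ)) := by
    rw [tsupport]
    apply closure_minimal _ ((isClosed_tsupport _).preimage hτcont)
    intro y hy
    by_contra hyn
    exact hy (hτloc f₀ hf₀pos y hyn)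
  -- σ x ∈ tsupport (T f₀)
  have hσx : σ x ∈ tsupport (⇑(T f₀) : Y → ℝ) := by
    by_contra hσn
    have := hσloc (T f₀) hTf₀pos x hσn
    rw [hST f₀ hf₀pos] at this
    have : f x = 0 := this
    rw [hf1 rfl] at this
    norm_num at this
  have hτσ : τ (σ x) ∈ closure U := hsupp (hTsupp hσx)
  -- but τ (σ x) ∈ V, disjoint from closure U
  have : V ∩ closure U = ∅ := by
    have := hdUV.symm
    rw [Set.disjoint_iff_inter_eq_empty] at this
    have h2 : closure U ⊆ Vᶜ := closure_minimal
      (by intro z hz hzV; exact Set.eq_empty_iff_forall_notMem.mp this z ⟨hz, hzV⟩)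
      hV.isClosed_compl
    ext z
    simp only [Set.mem_inter_iff, Set.mem_empty_iff_false, iff_false]
    rintro ⟨hzV, hzU⟩
    exact h2 hzU hzV
  exact Set.eq_empty_iff_forall_notMem.mp this _ ⟨hxV, hτσ⟩
end
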